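/- arXiv:0901.3859 — 6 statements merged into one kernel-verified Lean document; each statement's English description precedes it below -/
import Mathlib

section
/- Let A be a finite set, let e, f⁻, f⁺ : A → [0,∞) and M⁻, M⁺ : A × A → [0,∞), and set f = f⁻ + f⁺ and M = M⁻ + M⁺. Let S⁻ = S(A, e, f⁻, M⁻). Define, for a ∈ A \ S⁻: f̂(a) = f⁺(a) + ∑_{b∈S⁻} M⁺(b,a) and ê(a) = e(a) − f⁻(a) − ∑_{b∈S⁻} M⁻(b,a), and let M̂ be the restriction of M to (A \ S⁻) × (A \ S⁻). Then ê(a) ≥ 0 for every a ∈ A \ S⁻, and if S⁺ = S(A \ S⁻, ê, f̂, M̂), then S(A, e, f, M) = S⁻ ∪ S⁺. -/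
open scoped Classical

/-- The map `T(B) = {a ∈ A : f(a) + ∑_{b ∈ B} M(b,a) > e(a)}` on subsets of a finite set `A`. -/
noncomputable def Tmap {A : Type*} [Fintype A] (e f : A → ℝ) (M : A → A → ℝ)
    (B : Finset A) : Finset A :=
  Finset.univ.filter (fun a => e a < f a + ∑ b ∈ B, M b a)

/-- `S` is the smallest fixed point of `T`. -/
def IsSmallestFP {A : Type*} (T : Finset A → Finset A) (S : Finset A) : Prop :=
  T S = S ∧ ∀ S' : Finset A, T S' = S' → S ⊆ S'

/-!
Nodes of `S⁻` are switched on by `(f⁻, M⁻)` alone, so they are in `S` as well. Once they are on,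
a node `a ∉ S⁻` is switched on by the full data exactly when
`e a < f⁻ a + f⁺ a + ∑_{b ∈ S⁻} (M⁻ + M⁺)(b, a) + ∑_{b ∈ P} M(b, a)`, which is the condition
`ê a < f̂ a + ∑_{b ∈ P} M̂(b, a)` defining the reduced map. Hence `P ↦ S⁻ ∪ P` sends the fixed
points of the reduced map onto the fixed points of the full map containing `S⁻`, and the smallest
ones correspond. The bound `ê ≥ 0` says that `a ∉ S⁻` is not switched on by `(f⁻, M⁻)`.
-/

section Finset

variable {α : Type*} [DecidableEq α]

theorem Finset.subtype_notMem_union_image_val (R : Finset α) (P : Finset {a // a ∉ R}) :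
    (R ∪ P.image Subtype.val).subtype (· ∉ R) = P := by
  ext x
  simp [x.2]

theorem Finset.union_image_val_subtype_notMem {R S : Finset α} (h : R ⊆ S) :
    R ∪ (S.subtype (· ∉ R)).image Subtype.val = S := by
  ext a
  by_cases ha : a ∈ R
  · simp [ha, h ha]
  · simp [ha]

theorem IsSmallestFP.subset_of_map_subset {T : Finset α → Finset α} (hT : Monotone T)
    {S : Finset α} (hS : IsSmallestFP T S) {X : Finset α} (hX : T X ⊆ X) : S ⊆ X := by
  induction X using Finset.strongInduction with
  | _ X ih =>
    by_cases hfix : T X = X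
    · exact hS.2 X hfix
    · exact (ih (T X) (hX.ssubset_of_ne hfix) (hT hX)).trans hX

end Finset

section Tmap

variable {A : Type*} [Fintype A]

theorem mem_Tmap {e f : A → ℝ} {M : A → A → ℝ} {B : Finset A} {a : A} :
    a ∈ Tmap e f M B ↔ e a < f a + ∑ b ∈ B, M b a := by
  simp [Tmap]

theorem Tmap_monotone {e f : A → ℝ} {M : A → A → ℝ} (hM : ∀ b a, 0 ≤ M b a) :
    Monotone (Tmap e f M) := by
  intro B B' h a ha
  rw [mem_Tmap] at ha ⊢
  linarith [Finset.sum_le_sum_of_subset_of_nonneg h (fun b _ _ => hM b a)]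

theorem Tmap_subset_Tmap {e f f' : A → ℝ} {M M' : A → A → ℝ} (hf : ∀ a, f a ≤ f' a)
    (hM : ∀ b a, M b a ≤ M' b a) (B : Finset A) : Tmap e f M B ⊆ Tmap e f' M' B := by
  intro a ha
  rw [mem_Tmap] at ha ⊢
  linarith [hf a, Finset.sum_le_sum (fun b (_ : b ∈ B) => hM b a)]

theorem add_sum_le_of_notMem_of_Tmap_eq {e f : A → ℝ} {M : A → A → ℝ} {B : Finset A}
    (hB : Tmap e f M B = B) {a : A} (ha : a ∉ B) : f a + ∑ b ∈ B, M b a ≤ e a := by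
  rw [← hB, mem_Tmap, not_lt] at ha
  exact ha

theorem Tmap_eq_of_sub_eq {e f e' f' : A → ℝ} {M : A → A → ℝ}
    (h : ∀ a, e a - f a = e' a - f' a) : Tmap e f M = Tmap e' f' M := by
  ext B a
  rw [mem_Tmap, mem_Tmap]
  constructor <;> intro <;> linarith [h a]

variable [DecidableEq A]

theorem mem_Tmap_union_image_val_iff (e f : A → ℝ) (M : A → A → ℝ) (R : Finset A)
    (P : Finset {a // a ∉ R}) (a : {a // a ∉ R}) :
    a.1 ∈ Tmap e f M (R ∪ P.image Subtype.val) ↔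
      a ∈ Tmap (fun a => e a.1) (fun a => f a.1 + ∑ b ∈ R, M b a.1) (fun b a => M b.1 a.1) P := by
  have hdisj : Disjoint R (P.image Subtype.val) :=
    Finset.disjoint_right.mpr fun _ hb => by
      obtain ⟨b, -, rfl⟩ := Finset.mem_image.mp hb
      exact b.2
  rw [mem_Tmap, mem_Tmap, Finset.sum_union hdisj, Finset.sum_image Subtype.val_injective.injOn,
    add_assoc]

theorem Tmap_union_image_val {e f : A → ℝ} {M : A → A → ℝ} {R : Finset A}
    (P : Finset {a // a ∉ R}) (hR : R ⊆ Tmap e f M (R ∪ P.image Subtype.val)) :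
    Tmap e f M (R ∪ P.image Subtype.val) = R ∪
      (Tmap (fun a => e a.1) (fun a => f a.1 + ∑ b ∈ R, M b a.1) (fun b a => M b.1 a.1) P).image
        Subtype.val := by
  ext a
  by_cases ha : a ∈ R
  · simp [ha, hR ha]
  · simpa [ha] using mem_Tmap_union_image_val_iff e f M R P ⟨a, ha⟩

end Tmap

theorem smallest_fixed_point_two_stage_general {A : Type*} [Fintype A] [DecidableEq A]
    (e fm fp : A → ℝ) (Mm Mp : A → A → ℝ)
    (hfp : ∀ a, 0 ≤ fp a)
    (hMm : ∀ b a, 0 ≤ Mm b a) (hMp : ∀ b a, 0 ≤ Mp b a)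
    -- `S⁻` is the smallest fixed point for the data `(e, f⁻, M⁻)`
    (Sm : Finset A)
    (hSm : IsSmallestFP (Tmap e fm Mm) Sm)
    -- `S⁺` is the smallest fixed point on `A \ S⁻` for the data `(ê, f̂, M̂)`
    (Sp : Finset {a : A // a ∉ Sm})
    (hSp : IsSmallestFP
      (Tmap (fun a => e a.1 - fm a.1 - ∑ b ∈ Sm, Mm b a.1)
            (fun a => fp a.1 + ∑ b ∈ Sm, Mp b a.1)
            (fun b a => Mm b.1 a.1 + Mp b.1 a.1)) Sp)
    -- `S` is the smallest fixed point for the data `(e, f⁻ + f⁺, M⁻ + M⁺)`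
    (S : Finset A)
    (hS : IsSmallestFP
      (Tmap e (fun a => fm a + fp a) (fun b a => Mm b a + Mp b a)) S) :
    (∀ a : {a : A // a ∉ Sm}, 0 ≤ e a.1 - fm a.1 - ∑ b ∈ Sm, Mm b a.1) ∧
    S = Sm ∪ Sp.image Subtype.val := by
  set T := Tmap e (fun a => fm a + fp a) (fun b a => Mm b a + Mp b a)
  have hT_ge : ∀ X, Tmap e fm Mm X ⊆ T X :=
    Tmap_subset_Tmap (fun a => le_add_of_nonneg_right (hfp a))
      (fun b a => le_add_of_nonneg_right (hMp b a))
  set Tred := Tmap (fun a : {a // a ∉ Sm} => e a.1)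
    (fun a => fm a.1 + fp a.1 + ∑ b ∈ Sm, (Mm b a.1 + Mp b a.1))
    (fun b a => Mm b.1 a.1 + Mp b.1 a.1)
  have hreduced : Tmap (fun a : {a // a ∉ Sm} => e a.1 - fm a.1 - ∑ b ∈ Sm, Mm b a.1)
      (fun a => fp a.1 + ∑ b ∈ Sm, Mp b a.1) (fun b a => Mm b.1 a.1 + Mp b.1 a.1) = Tred :=
    Tmap_eq_of_sub_eq fun a => by rw [Finset.sum_add_distrib]; ring
  rw [hreduced] at hSp
  have hlift : ∀ P, T (Sm ∪ P.image Subtype.val) = Sm ∪ (Tred P).image Subtype.val := fun P =>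
    Tmap_union_image_val P <| hSm.1.symm.subset.trans <|
      (Tmap_monotone hMm Finset.subset_union_left).trans (hT_ge _)
  refine ⟨fun a => ?_, ?_⟩
  · linarith [add_sum_le_of_notMem_of_Tmap_eq hSm.1 a.2]
  · have hSmS : Sm ⊆ S :=
      hSm.subset_of_map_subset (Tmap_monotone hMm) ((hT_ge S).trans hS.1.subset)
    set P := S.subtype (· ∉ Sm)
    have hP : Sm ∪ P.image Subtype.val = S := Finset.union_image_val_subtype_notMem hSmS
    have hPfix : Tred P = P := by
      have := congrArg (Finset.subtype (· ∉ Sm)) (hlift P)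
      rwa [hP, hS.1, Finset.subtype_notMem_union_image_val, eq_comm] at this
    refine (hS.2 _ ?_).antisymm ?_
    · rw [hlift, hSp.1]
    · rw [← hP]
      exact Finset.union_subset_union le_rfl (Finset.image_subset_image (hSp.2 P hPfix))

theorem smallest_fixed_point_two_stage {A : Type*} [Fintype A] [DecidableEq A]
    (e fm fp : A → ℝ) (Mm Mp : A → A → ℝ)
    (he : ∀ a, 0 ≤ e a)
    (hfm : ∀ a, 0 ≤ fm a) (hfp : ∀ a, 0 ≤ fp a)
    (hMm : ∀ b a, 0 ≤ Mm b a) (hMp : ∀ b a, 0 ≤ Mp b a)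
    -- `S⁻` is the smallest fixed point for the data `(e, f⁻, M⁻)`
    (Sm : Finset A)
    (hSm : IsSmallestFP (Tmap e fm Mm) Sm)
    -- `S⁺` is the smallest fixed point on `A \ S⁻` for the data `(ê, f̂, M̂)`
    (Sp : Finset {a : A // a ∉ Sm})
    (hSp : IsSmallestFP
      (Tmap (fun a => e a.1 - fm a.1 - ∑ b ∈ Sm, Mm b a.1)
            (fun a => fp a.1 + ∑ b ∈ Sm, Mp b a.1)
            (fun b a => Mm b.1 a.1 + Mp b.1 a.1)) Sp)
    -- `S` is the smallest fixed point for the data `(e, f⁻ + f⁺, M⁻ + M⁺)`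
    (S : Finset A)
    (hS : IsSmallestFP
      (Tmap e (fun a => fm a + fp a) (fun b a => Mm b a + Mp b a)) S) :
    (∀ a : {a : A // a ∉ Sm}, 0 ≤ e a.1 - fm a.1 - ∑ b ∈ Sm, Mm b a.1) ∧
    S = Sm ∪ Sp.image Subtype.val :=
  smallest_fixed_point_two_stage_general e fm fp Mm Mp hfp hMm hMp Sm hSm Sp hSp S hS
end

section
/- Let t > 0, let (ν_s)_{s∈[0,t]} be a weakly continuous family of finite Borel measures on ℝ^d, and let n : [0,t] × ℝ^d → [0,∞) be bounded and continuous and such that for every s ∈ [0,t] and every Borel set A ⊆ ℝ^d one has ∫₀^s ν_r(A) dr = ∫_A n(s,x) dx. Then for every continuous compactly supported ψ : ℝ^d → ℝ, ∫_{ℝ^d} (1 − e^{−n(t,x)}) ψ(x) dx = ∫₀^t ( ∫_{ℝ^d} e^{−n(s,x)} ψ(x) ν_s(dx) ) ds. -/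
/-!
Write `Φ s = ∫ (1 - exp (-n s x)) ψ x dx`. The density hypothesis says that `n s` is the
Radon–Nikodym density of the occupation measure `∫₀ˢ ν r dr`, so a.e. `n s ≤ n s'` for `s ≤ s'`
and `n 0 = 0`, and `∫ g (n s' - n s) = ∫ₛ^s' ∫ g dν r dr` for every test function `g`. With
`g = exp (-n s) ψ` and the Taylor bound `|e⁻ᵇ - e⁻ᵃ + e⁻ᵃ (b - a)| ≤ (b - a)²`, the remainder
`Φ s' - Φ s - ∫ₛ^s' ∫ g dν r dr` is at most `sup |n s' - n s| · ∫ |ψ| (n s' - n s)`, which is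
`o(s' - s)` by uniform continuity of `n` on `[0, t] × supp ψ`. Hence `Φ` has right derivative
`∫ exp (-n s) ψ dν s`, which is continuous in `s` by weak continuity of `ν`, and the fundamental
theorem of calculus gives `Φ t = Φ 0 + ∫₀ᵗ Φ'` with `Φ 0 = 0`.
-/

open MeasureTheory ProbabilityTheory Filter Set Topology Asymptotics
open scoped ENNReal NNReal BoundedContinuousFunction CompactlySupported

theorem MeasureTheory.Measure.ext_of_forall_measure_lt_top {α : Type*} [MeasurableSpace α]
    {μ ν₁ ν₂ : Measure α} [SigmaFinite μ]
    (h : ∀ s, MeasurableSet s → μ s < ∞ → ν₁ s = ν₂ s) : ν₁ = ν₂ := by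
  ext s hs
  have hmono : Monotone fun i => s ∩ spanningSets μ i :=
    fun i j hij => inter_subset_inter_right s (monotone_spanningSets μ hij)
  have hs_eq : ⋃ i, s ∩ spanningSets μ i = s := by
    rw [← inter_iUnion, iUnion_spanningSets, inter_univ]
  rw [← hs_eq, hmono.measure_iUnion, hmono.measure_iUnion]
  exact iSup_congr fun i => h _ (hs.inter (measurableSet_spanningSets μ i))
    ((measure_mono inter_subset_right).trans_lt (measure_spanningSets_lt_top μ i))

theorem MeasureTheory.ae_le_of_withDensity_le {α : Type*} [MeasurableSpace α] {μ : Measure α}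
    [SigmaFinite μ] {f g : α → ℝ≥0∞} (hf : Measurable f)
    (h : μ.withDensity f ≤ μ.withDensity g) : f ≤ᵐ[μ] g :=
  ae_le_of_forall_setLIntegral_le_of_sigmaFinite hf fun s hs _ => by
    simpa only [withDensity_apply _ hs] using Measure.le_iff'.1 h s

theorem Real.abs_exp_neg_sub_exp_neg_add_mul_le {a b : ℝ} (ha : 0 ≤ a) (hab : |b - a| ≤ 1) :
    |Real.exp (-b) - Real.exp (-a) + Real.exp (-a) * (b - a)| ≤ (b - a) ^ 2 := by
  have hsplit : Real.exp (-b) - Real.exp (-a) + Real.exp (-a) * (b - a)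
      = Real.exp (-a) * (Real.exp (-(b - a)) - 1 - -(b - a)) := by
    rw [show -b = -a + -(b - a) by ring, Real.exp_add]; ring
  rw [hsplit, abs_mul, abs_of_pos (Real.exp_pos _)]
  calc Real.exp (-a) * |Real.exp (-(b - a)) - 1 - -(b - a)| ≤ 1 * (-(b - a)) ^ 2 :=
        mul_le_mul (Real.exp_le_one_iff.2 (neg_nonpos.2 ha))
          (Real.abs_exp_sub_one_sub_id_le (by rwa [abs_neg])) (abs_nonneg _) zero_le_one
    _ = (b - a) ^ 2 := by ring

theorem IsCompact.eventually_forall_dist_lt {α β E : Type*} [TopologicalSpace α]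
    [TopologicalSpace β] [PseudoMetricSpace E] {f : α → β → E} {s : Set α} {k : Set β} {q : α}
    (hk : IsCompact k) (hf : ContinuousOn f.uncurry (s ×ˢ k)) (hq : q ∈ s) {ε : ℝ}
    (hε : 0 < ε) : ∀ᶠ p in 𝓝[s] q, ∀ x ∈ k, dist (f p x) (f q x) < ε := by
  obtain ⟨v, hv, hvε⟩ := hk.mem_uniformity_of_prod hf hq (Metric.dist_mem_uniformity hε)
  exact Filter.mem_of_superset hv hvε

theorem ContinuousOn.continuous_of_uncurry {α β γ : Type*} [TopologicalSpace α]
    [TopologicalSpace β] [TopologicalSpace γ] {f : α → β → γ} {s : Set α}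
    (h : ContinuousOn f.uncurry (s ×ˢ univ)) {a : α} (ha : a ∈ s) : Continuous (f a) :=
  continuousOn_univ.1 (h.uncurry_left a ha)

namespace MeasureTheory.FiniteMeasure

variable {X : Type*} [TopologicalSpace X] [MeasurableSpace X]

theorem measurable_coe_of_continuous [HasOuterApproxClosed X] [BorelSpace X] {T : Type*}
    [TopologicalSpace T] [MeasurableSpace T] [OpensMeasurableSpace T] {ν : T → FiniteMeasure X}
    (hν : Continuous ν) : Measurable fun r => (ν r : Measure X) := by
  refine .measure_of_isPiSystem (S := {F | IsClosed F})
    (BorelSpace.measurable_eq.trans borel_eq_generateFrom_isClosed) isPiSystem_isClosed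
    (fun F hF => ?_) ?_
  · have : UpperSemicontinuous fun r => (ν r : Measure X) F := fun r _ hy =>
      eventually_lt_of_limsup_lt
        ((limsup_measure_closed_le_of_tendsto (hν.tendsto r) hF).trans_lt hy)
    exact this.measurable
  · simpa only [Function.comp_def, ennreal_mass] using
      (ENNReal.continuous_coe.comp (continuous_mass.comp hν)).measurable

theorem exists_forall_integral_abs_le {ι : Type*} {ν : ι → FiniteMeasure X} {M : ℝ≥0}
    (hM : ∀ i, (ν i).mass ≤ M) {g : X → ℝ} (hg : Continuous g) (hgs : HasCompactSupport g) :
    ∃ C, 0 ≤ C ∧ ∀ i, ∫ x, |g x| ∂(ν i : Measure X) ≤ C := by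
  obtain ⟨Cg, hCg⟩ := hgs.exists_bound_of_continuous hg
  refine ⟨max Cg 0 * M, by positivity, fun i => ?_⟩
  calc _ ≤ ‖∫ x, |g x| ∂(ν i : Measure X)‖ := Real.le_norm_self _
    _ ≤ max Cg 0 * (ν i : Measure X).real univ := norm_integral_le_of_norm_le_const
        (ae_of_all _ fun x => by rw [norm_abs_eq_norm]; exact (hCg x).trans (le_max_left _ _))
    _ ≤ max Cg 0 * M := mul_le_mul_of_nonneg_left (by exact_mod_cast hM i) (le_max_right _ _)

variable [OpensMeasurableSpace X]

theorem continuous_integral_of_hasCompactSupport {T : Type*} [TopologicalSpace T]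
    {ν : T → FiniteMeasure X} (hν : Continuous ν) {g : X → ℝ} (hg : Continuous g)
    (hgs : HasCompactSupport g) : Continuous fun r => ∫ x, g x ∂(ν r : Measure X) :=
  continuous_iff_forall_continuous_integral.1 hν
    (⟨⟨g, hg⟩, hgs⟩ : C_c(X, ℝ)).toBoundedContinuousFunction

theorem tendsto_integral_of_tendstoUniformly {ι : Type*} {l : Filter ι}
    {ν : ι → FiniteMeasure X} {ν₀ : FiniteMeasure X} (hν : Tendsto ν l (𝓝 ν₀))
    {F : ι → X → ℝ} {f : X →ᵇ ℝ} (hF : TendstoUniformly F f l)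
    (hFm : ∀ᶠ i in l, AEStronglyMeasurable (F i) (ν i)) :
    Tendsto (fun i => ∫ x, F i x ∂(ν i : Measure X)) l (𝓝 (∫ x, f x ∂(ν₀ : Measure X))) := by
  suffices Tendsto (fun i => ∫ x, F i x ∂(ν i : Measure X) - ∫ x, f x ∂(ν i : Measure X)) l
      (𝓝 0) by
    simpa using this.add (tendsto_iff_forall_integral_tendsto.1 hν f)
  have hmass : ∀ᶠ i in l, (ν i).mass < ν₀.mass + 1 :=
    ((continuous_mass.tendsto ν₀).comp hν).eventually (gt_mem_nhds (lt_add_one _))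
  rw [Metric.tendsto_nhds]
  intro ε hε
  have hδ : 0 < ε / (ν₀.mass + 1) := by positivity
  filter_upwards [hmass, Metric.tendstoUniformly_iff.1 hF _ hδ, hFm] with i hi hFi hmi
  have hbound : ∀ x, ‖F i x - f x‖ ≤ ε / (ν₀.mass + 1) := fun x => by
    rw [← dist_eq_norm, dist_comm]; exact (hFi x).le
  have hint : Integrable (F i) (ν i) := by
    simpa using (f.integrable _).add
      (Integrable.of_bound (hmi.sub f.continuous.aestronglyMeasurable) _ (ae_of_all _ hbound))
  rw [dist_zero_right, ← integral_sub hint (f.integrable _)]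
  calc ‖∫ x, F i x - f x ∂(ν i : Measure X)‖
      ≤ ε / (ν₀.mass + 1) * (ν i : Measure X).real univ :=
        norm_integral_le_of_norm_le_const (ae_of_all _ hbound)
    _ < ε := by
        rw [div_mul_eq_mul_div, div_lt_iff₀ (by positivity)]
        exact mul_lt_mul_of_pos_left (by exact_mod_cast hi) hε

end MeasureTheory.FiniteMeasure

namespace MeasureTheory

theorem abs_integral_exp_neg_remainder_le {X : Type*} [TopologicalSpace X] [MeasurableSpace X]
    [OpensMeasurableSpace X] {μ : Measure X} [IsFiniteMeasureOnCompacts μ] {f g ψ : X → ℝ}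
    (hf : Continuous f) (hg : Continuous g) (hf0 : ∀ x, 0 ≤ f x) (hfg : f ≤ᵐ[μ] g)
    (hψ : Continuous ψ) (hψs : HasCompactSupport ψ)
    {ε : ℝ} (hε1 : ε ≤ 1) (hclose : ∀ x ∈ tsupport ψ, |g x - f x| ≤ ε) :
    |∫ x, (Real.exp (-g x) - Real.exp (-f x) + Real.exp (-f x) * (g x - f x)) * ψ x ∂μ|
      ≤ ε * ∫ x, |ψ x| * (g x - f x) ∂μ := by
  rw [← integral_const_mul]
  refine abs_integral_le_integral_abs.trans (integral_mono_ae ?_ ?_ ?_)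
  · exact ((by fun_prop : Continuous fun x => (Real.exp (-g x) - Real.exp (-f x)
      + Real.exp (-f x) * (g x - f x)) * ψ x).integrable_of_hasCompactSupport
      hψs.mul_left).abs
  · exact (by fun_prop : Continuous fun x => ε * (|ψ x| * (g x - f x))
      ).integrable_of_hasCompactSupport hψs.abs.mul_right.mul_left
  filter_upwards [hfg] with x hx
  by_cases hxψ : x ∈ tsupport ψ
  · have hΔ := hclose x hxψ
    rw [abs_of_nonneg (sub_nonneg.2 hx)] at hΔ
    rw [abs_mul]
    calc _ ≤ (g x - f x) ^ 2 * |ψ x| := mul_le_mul_of_nonneg_right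
          (Real.abs_exp_neg_sub_exp_neg_add_mul_le (hf0 x)
            (by rw [abs_of_nonneg (sub_nonneg.2 hx)]; linarith)) (abs_nonneg _)
      _ ≤ ε * (|ψ x| * (g x - f x)) := by
          nlinarith [abs_nonneg (ψ x), mul_le_mul_of_nonneg_left hΔ (sub_nonneg.2 hx)]
  · simp [image_eq_zero_of_notMem_tsupport hxψ]

section Continuity

variable {X : Type*} [TopologicalSpace X] [MeasurableSpace X] [OpensMeasurableSpace X]
  {n : ℝ → X → ℝ} {ψ : X → ℝ} {t : ℝ}

theorem continuousOn_integral_one_sub_exp_neg {μ : Measure X} [IsFiniteMeasureOnCompacts μ]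
    (hn0 : ∀ s x, 0 ≤ n s x) (hn : ContinuousOn n.uncurry (Icc 0 t ×ˢ univ))
    (hψ : Continuous ψ) (hψs : HasCompactSupport ψ) :
    ContinuousOn (fun s => ∫ x, (1 - Real.exp (-n s x)) * ψ x ∂μ) (Icc 0 t) := by
  refine continuousOn_of_dominated (bound := fun x => |ψ x|)
    (fun s hs => ((continuous_const.sub (hn.continuous_of_uncurry hs).neg.rexp).mul
      hψ).aestronglyMeasurable)
    (fun s _ => ae_of_all _ fun x => ?_) (hψ.abs.integrable_of_hasCompactSupport hψs.abs)
    (ae_of_all _ fun x => (continuousOn_const.sub (hn.uncurry_right x (mem_univ x)).neg.rexp).mul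
      continuousOn_const)
  rw [norm_mul, Real.norm_eq_abs]
  refine mul_le_of_le_one_left (abs_nonneg _) (abs_le.2 ⟨?_, ?_⟩)
  · linarith [Real.exp_le_one_iff.2 (neg_nonpos.2 (hn0 s x))]
  · linarith [Real.exp_pos (-n s x)]

theorem continuousOn_integral_exp_neg_mul {ν : ℝ → FiniteMeasure X} (hν : Continuous ν)
    (hn : ContinuousOn n.uncurry (Icc 0 t ×ˢ univ)) (hψ : Continuous ψ)
    (hψs : HasCompactSupport ψ) :
    ContinuousOn (fun s => ∫ x, Real.exp (-n s x) * ψ x ∂(ν s : Measure X)) (Icc 0 t) := by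
  intro s hs
  let f : C_c(X, ℝ) := ⟨⟨fun x => Real.exp (-n s x) * ψ x,
    (hn.continuous_of_uncurry hs).neg.rexp.mul hψ⟩, hψs.mul_left⟩
  refine FiniteMeasure.tendsto_integral_of_tendstoUniformly (f := f.toBoundedContinuousFunction)
    hν.continuousWithinAt (Metric.tendstoUniformly_iff.2 fun ε hε => ?_) ?_
  · have hcont : ContinuousOn (fun p : ℝ × X => Real.exp (-n p.1 p.2) * ψ p.2)
        (Icc 0 t ×ˢ tsupport ψ) :=
      (hn.mono (prod_mono_right (subset_univ _))).neg.rexp.mul (hψ.comp continuous_snd).continuousOn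
    filter_upwards [hψs.isCompact.eventually_forall_dist_lt
      (f := fun s x => Real.exp (-n s x) * ψ x) hcont hs hε] with s' hs' x
    by_cases hx : x ∈ tsupport ψ
    · rw [dist_comm]; exact hs' x hx
    · simp [f, image_eq_zero_of_notMem_tsupport hx, hε]
  · filter_upwards [self_mem_nhdsWithin] with s' hs'
    exact ((hn.continuous_of_uncurry hs').neg.rexp.mul hψ).aestronglyMeasurable

end Continuity

section OccupationMeasure

variable {X : Type*} [MeasurableSpace X] {ν : ℝ → FiniteMeasure X}

noncomputable def occupationMeasure (ν : ℝ → FiniteMeasure X) (s : ℝ) : Measure X :=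
  (volume.restrict (Ioc 0 s)).bind fun r => ν r

theorem occupationMeasure_apply (hν : Measurable fun r => (ν r : Measure X)) (s : ℝ)
    {A : Set X} (hA : MeasurableSet A) :
    occupationMeasure ν s A = ∫⁻ r in Ioc 0 s, (ν r : Measure X) A :=
  Measure.bind_apply hA hν.aemeasurable

theorem occupationMeasure_mono (hν : Measurable fun r => (ν r : Measure X)) {s s' : ℝ}
    (hss' : s ≤ s') : occupationMeasure ν s ≤ occupationMeasure ν s' :=
  Measure.le_iff.2 fun A hA => by
    rw [occupationMeasure_apply hν s hA, occupationMeasure_apply hν s' hA]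
    exact lintegral_mono_set (Ioc_subset_Ioc_right hss')

@[simp]
theorem occupationMeasure_zero : occupationMeasure ν 0 = 0 := by
  simp [occupationMeasure]

theorem isFiniteMeasure_occupationMeasure (hν : Measurable fun r => (ν r : Measure X))
    {M : ℝ≥0} (hM : ∀ r, (ν r).mass ≤ M) (s : ℝ) : IsFiniteMeasure (occupationMeasure ν s) where
  measure_univ_lt_top := by
    rw [occupationMeasure_apply hν s MeasurableSet.univ]
    calc ∫⁻ r in Ioc 0 s, (ν r : Measure X) univ ≤ ∫⁻ _ in Ioc 0 s, (M : ℝ≥0∞) :=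
          lintegral_mono fun r => by
            rw [← FiniteMeasure.ennreal_mass]; exact ENNReal.coe_le_coe.2 (hM r)
      _ < ∞ := by
          rw [setLIntegral_const]; exact ENNReal.mul_lt_top ENNReal.coe_lt_top measure_Ioc_lt_top

theorem integral_occupationMeasure [TopologicalSpace X] [OpensMeasurableSpace X]
    (hν : Measurable fun r => (ν r : Measure X)) {M : ℝ≥0} (hM : ∀ r, (ν r).mass ≤ M)
    {s : ℝ} (hs : 0 ≤ s) {g : X → ℝ} (hg : Continuous g) (hgs : HasCompactSupport g) :
    ∫ x, g x ∂occupationMeasure ν s = ∫ r in 0..s, ∫ x, g x ∂(ν r : Measure X) := by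
  let κ : Kernel ℝ X := ⟨fun r => ν r, hν⟩
  have : IsFiniteMeasure (κ ∘ₘ volume.restrict (Ioc 0 s)) :=
    isFiniteMeasure_occupationMeasure hν hM s
  have hint : Integrable g (κ ∘ₘ volume.restrict (Ioc 0 s)) :=
    hg.integrable_of_hasCompactSupport hgs
  rw [intervalIntegral.integral_of_le hs]
  change ∫ x, g x ∂(κ ∘ₘ volume.restrict (Ioc 0 s)) = _
  rw [Measure.comp_eq_comp_const_apply] at hint ⊢
  rw [Kernel.integral_comp hint]
  rfl

theorem withDensity_ofReal_eq_occupationMeasure {μ : Measure X} [SigmaFinite μ]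
    (hν : Measurable fun r => (ν r : Measure X)) {M : ℝ≥0} (hM : ∀ r, (ν r).mass ≤ M)
    {s : ℝ} (hs : 0 ≤ s) {f : X → ℝ} (hfm : Measurable f) (hf0 : ∀ x, 0 ≤ f x) {K : ℝ}
    (hfK : ∀ x, f x ≤ K)
    (hdens : ∀ A, MeasurableSet A → μ A < ∞ →
      ∫ r in 0..s, ((ν r : Measure X) A).toReal = ∫ x in A, f x ∂μ) :
    μ.withDensity (fun x => ENNReal.ofReal (f x)) = occupationMeasure ν s := by
  refine Measure.ext_of_forall_measure_lt_top (μ := μ) fun A hA hAμ => ?_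
  have hfA : IntegrableOn f A μ := IntegrableOn.of_bound hAμ hfm.aestronglyMeasurable K
    (ae_of_all _ fun x => by rw [Real.norm_of_nonneg (hf0 x)]; exact hfK x)
  have hνA : IntegrableOn (fun r => ((ν r : Measure X) A).toReal) (Ioc 0 s) :=
    IntegrableOn.of_bound measure_Ioc_lt_top
      ((Measure.measurable_coe hA).comp hν).ennreal_toReal.aestronglyMeasurable M
      (ae_of_all _ fun r => by
        rw [Real.norm_of_nonneg ENNReal.toReal_nonneg]
        exact_mod_cast ((ν r).apply_le_mass A).trans (hM r))
  rw [withDensity_apply _ hA, occupationMeasure_apply hν s hA,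
    ← ofReal_integral_eq_lintegral_ofReal hfA (ae_of_all _ hf0), ← hdens A hA hAμ,
    intervalIntegral.integral_of_le hs,
    ofReal_integral_eq_lintegral_ofReal hνA (ae_of_all _ fun _ => ENNReal.toReal_nonneg)]
  exact lintegral_congr fun r => ENNReal.ofReal_toReal (measure_ne_top _ _)

end OccupationMeasure

section OccupationDensity

variable {X : Type*} [MeasurableSpace X] {μ : Measure X} {ν : ℝ → FiniteMeasure X}
  {n : ℝ → X → ℝ} {t : ℝ}

def IsOccupationDensity (μ : Measure X) (ν : ℝ → FiniteMeasure X) (n : ℝ → X → ℝ) (t : ℝ) :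
    Prop :=
  ∀ s ∈ Icc 0 t, μ.withDensity (fun x => ENNReal.ofReal (n s x)) = occupationMeasure ν s

namespace IsOccupationDensity

theorem ae_le [SigmaFinite μ] (h : IsOccupationDensity μ ν n t)
    (hν : Measurable fun r => (ν r : Measure X)) (hn0 : ∀ s x, 0 ≤ n s x) {s s' : ℝ}
    (hs : s ∈ Icc 0 t) (hs' : s' ∈ Icc 0 t) (hnm : Measurable (n s)) (hss' : s ≤ s') :
    n s ≤ᵐ[μ] n s' := by
  have hle : μ.withDensity (fun x => ENNReal.ofReal (n s x))
      ≤ μ.withDensity (fun x => ENNReal.ofReal (n s' x)) := by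
    rw [h s hs, h s' hs']; exact occupationMeasure_mono hν hss'
  filter_upwards [ae_le_of_withDensity_le hnm.ennreal_ofReal hle] with x hx
  exact (ENNReal.ofReal_le_ofReal_iff (hn0 s' x)).1 hx

theorem ae_eq_zero (h : IsOccupationDensity μ ν n t) (ht : 0 ≤ t) (hn0 : ∀ x, 0 ≤ n 0 x)
    (hnm : Measurable (n 0)) : n 0 =ᵐ[μ] 0 := by
  have hzero : μ.withDensity (fun x => ENNReal.ofReal (n 0 x)) = 0 := by
    rw [h 0 ⟨le_rfl, ht⟩, occupationMeasure_zero]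
  filter_upwards [(withDensity_eq_zero_iff hnm.ennreal_ofReal.aemeasurable).1 hzero] with x hx
  exact le_antisymm (ENNReal.ofReal_eq_zero.1 hx) (hn0 x)

variable [TopologicalSpace X] [OpensMeasurableSpace X]

theorem integral_mul_eq (h : IsOccupationDensity μ ν n t)
    (hν : Measurable fun r => (ν r : Measure X)) {M : ℝ≥0} (hM : ∀ r, (ν r).mass ≤ M)
    {s : ℝ} (hs : s ∈ Icc 0 t) (hnm : Measurable (n s)) (hn0 : ∀ x, 0 ≤ n s x) {g : X → ℝ}
    (hg : Continuous g) (hgs : HasCompactSupport g) :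
    ∫ x, n s x * g x ∂μ = ∫ r in 0..s, ∫ x, g x ∂(ν r : Measure X) := by
  rw [← integral_occupationMeasure hν hM hs.1 hg hgs, ← h s hs]
  refine Eq.trans ?_ (integral_withDensity_eq_integral_smul hnm.real_toNNReal g).symm
  congr with x
  rw [NNReal.smul_def, smul_eq_mul, Real.coe_toNNReal _ (hn0 x)]

theorem integral_mul_sub_eq [HasOuterApproxClosed X] [BorelSpace X] [IsFiniteMeasureOnCompacts μ]
    (h : IsOccupationDensity μ ν n t) (hν : Continuous ν) {M : ℝ≥0} (hM : ∀ r, (ν r).mass ≤ M)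
    (hn0 : ∀ s x, 0 ≤ n s x) {s s' : ℝ} (hs : s ∈ Icc 0 t) (hs' : s' ∈ Icc 0 t)
    (hns : Continuous (n s)) (hns' : Continuous (n s')) {g : X → ℝ} (hg : Continuous g)
    (hgs : HasCompactSupport g) :
    ∫ x, g x * (n s' x - n s x) ∂μ = ∫ r in s..s', ∫ x, g x ∂(ν r : Measure X) := by
  have hνm := FiniteMeasure.measurable_coe_of_continuous hν
  have hint : ∀ {f : X → ℝ}, Continuous f → Integrable (fun x => f x * g x) μ :=
    fun hf => (hf.mul hg).integrable_of_hasCompactSupport hgs.mul_left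
  have hH : ∀ a b, IntervalIntegrable (fun r => ∫ x, g x ∂(ν r : Measure X)) volume a b :=
    (FiniteMeasure.continuous_integral_of_hasCompactSupport hν hg hgs).intervalIntegrable
  calc ∫ x, g x * (n s' x - n s x) ∂μ = ∫ x, n s' x * g x ∂μ - ∫ x, n s x * g x ∂μ := by
        rw [← integral_sub (hint hns') (hint hns)]; congr with x; ring
    _ = _ := by
        rw [h.integral_mul_eq hνm hM hs' hns'.measurable (hn0 s') hg hgs,
          h.integral_mul_eq hνm hM hs hns.measurable (hn0 s) hg hgs,
          intervalIntegral.integral_interval_sub_left (hH 0 s') (hH 0 s)]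

end IsOccupationDensity

end OccupationDensity

section Derivative

variable {X : Type*} [TopologicalSpace X] [MeasurableSpace X] [BorelSpace X]
  [HasOuterApproxClosed X] {μ : Measure X} [SigmaFinite μ] [IsFiniteMeasureOnCompacts μ]
  {ν : ℝ → FiniteMeasure X} {n : ℝ → X → ℝ} {ψ : X → ℝ} {t : ℝ}

namespace IsOccupationDensity

theorem abs_sub_sub_intervalIntegral_le (h : IsOccupationDensity μ ν n t) (hν : Continuous ν)
    {M : ℝ≥0} (hM : ∀ r, (ν r).mass ≤ M) (hn0 : ∀ s x, 0 ≤ n s x)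
    (hn : ContinuousOn n.uncurry (Icc 0 t ×ˢ univ)) (hψ : Continuous ψ)
    (hψs : HasCompactSupport ψ) {C : ℝ} (hC : ∀ r, ∫ x, |ψ x| ∂(ν r : Measure X) ≤ C)
    {s s' : ℝ} (hs : s ∈ Icc 0 t) (hs' : s' ∈ Icc 0 t) (hss' : s ≤ s') {ε : ℝ} (hε0 : 0 ≤ ε)
    (hε1 : ε ≤ 1) (hclose : ∀ x ∈ tsupport ψ, |n s' x - n s x| ≤ ε) :
    |∫ x, (1 - Real.exp (-n s' x)) * ψ x ∂μ - ∫ x, (1 - Real.exp (-n s x)) * ψ x ∂μ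
        - ∫ r in s..s', ∫ x, Real.exp (-n s x) * ψ x ∂(ν r : Measure X)|
      ≤ ε * (C * (s' - s)) := by
  have hns := hn.continuous_of_uncurry hs
  have hns' := hn.continuous_of_uncurry hs'
  have hint : ∀ {f : X → ℝ}, Continuous f → Integrable (fun x => f x * ψ x) μ :=
    fun hf => (hf.mul hψ).integrable_of_hasCompactSupport hψs.mul_left
  have hfs : HasCompactSupport fun x => Real.exp (-n s x) * ψ x := hψs.mul_left
  rw [← h.integral_mul_sub_eq hν hM hn0 hs hs' hns hns' (by fun_prop) hfs]
  calc _ = |∫ x, ((1 - Real.exp (-n s' x)) * ψ x - (1 - Real.exp (-n s x)) * ψ x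
          - Real.exp (-n s x) * ψ x * (n s' x - n s x)) ∂μ| := by
        rw [integral_sub, integral_sub]
        · exact hint (by fun_prop)
        · exact hint (by fun_prop)
        · exact (hint (by fun_prop)).sub (hint (by fun_prop))
        · exact (by fun_prop : Continuous fun x => Real.exp (-n s x) * ψ x * (n s' x - n s x)
            ).integrable_of_hasCompactSupport hfs.mul_right
    _ = |∫ x, (Real.exp (-n s' x) - Real.exp (-n s x)
          + Real.exp (-n s x) * (n s' x - n s x)) * ψ x ∂μ| := by
        rw [← abs_neg, ← integral_neg]; congr with x; ring
    _ ≤ ε * ∫ x, |ψ x| * (n s' x - n s x) ∂μ :=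
        abs_integral_exp_neg_remainder_le hns hns' (hn0 s)
          (h.ae_le (FiniteMeasure.measurable_coe_of_continuous hν) hn0 hs hs' hns.measurable hss')
          hψ hψs hε1 hclose
    _ ≤ ε * (C * (s' - s)) := by
        rw [h.integral_mul_sub_eq hν hM hn0 hs hs' hns hns' hψ.abs hψs.abs]
        refine mul_le_mul_of_nonneg_left ?_ hε0
        calc _ ≤ ∫ _ in s..s', C := intervalIntegral.integral_mono_on hss'
              ((FiniteMeasure.continuous_integral_of_hasCompactSupport hν hψ.abs
                hψs.abs).intervalIntegrable _ _) intervalIntegrable_const fun r _ => hC r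
          _ = C * (s' - s) := by rw [intervalIntegral.integral_const, smul_eq_mul, mul_comm]

theorem isLittleO_sub_sub_intervalIntegral (h : IsOccupationDensity μ ν n t)
    (hν : Continuous ν) {M : ℝ≥0} (hM : ∀ r, (ν r).mass ≤ M) (hn0 : ∀ s x, 0 ≤ n s x)
    (hn : ContinuousOn n.uncurry (Icc 0 t ×ˢ univ)) (hψ : Continuous ψ)
    (hψs : HasCompactSupport ψ) {s : ℝ} (hs : s ∈ Ioo 0 t) :
    (fun s' => ∫ x, (1 - Real.exp (-n s' x)) * ψ x ∂μ - ∫ x, (1 - Real.exp (-n s x)) * ψ x ∂μ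
        - ∫ r in s..s', ∫ x, Real.exp (-n s x) * ψ x ∂(ν r : Measure X))
      =o[𝓝[>] s] fun s' => s' - s := by
  have hsI : s ∈ Icc 0 t := Ioo_subset_Icc_self hs
  obtain ⟨C, hC0, hC⟩ := FiniteMeasure.exists_forall_integral_abs_le hM hψ hψs
  have hclose : ∀ ε > 0, ∀ᶠ s' in 𝓝[>] s, ∀ x ∈ tsupport ψ, dist (n s' x) (n s x) < ε :=
    fun ε hε => nhdsWithin_le_nhds (nhdsWithin_eq_nhds.2 (Icc_mem_nhds hs.1 hs.2) ▸
      hψs.isCompact.eventually_forall_dist_lt (hn.mono (prod_mono_right (subset_univ _))) hsI hε)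
  refine isLittleO_iff.2 fun c hc => ?_
  set ε := min 1 (c / (C + 1))
  have hε0 : 0 < ε := lt_min one_pos (by positivity)
  filter_upwards [hclose ε hε0, Ioo_mem_nhdsGT hs.2] with s' hs'close hs'
  rw [Real.norm_of_nonneg (sub_nonneg.2 hs'.1.le)]
  calc _ ≤ ε * (C * (s' - s)) := h.abs_sub_sub_intervalIntegral_le hν hM hn0 hn hψ hψs hC hsI
        ⟨hsI.1.trans hs'.1.le, hs'.2.le⟩ hs'.1.le hε0.le (min_le_left _ _)
        fun x hx => (hs'close x hx).le
    _ ≤ c * (s' - s) := by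
        rw [← mul_assoc]
        refine mul_le_mul_of_nonneg_right ?_ (sub_nonneg.2 hs'.1.le)
        calc ε * C ≤ c / (C + 1) * C := mul_le_mul_of_nonneg_right (min_le_right _ _) hC0
          _ ≤ c := by rw [div_mul_eq_mul_div, div_le_iff₀ (by positivity)]; nlinarith

theorem hasDerivWithinAt_integral_one_sub_exp_neg (h : IsOccupationDensity μ ν n t)
    (hν : Continuous ν) {M : ℝ≥0} (hM : ∀ r, (ν r).mass ≤ M) (hn0 : ∀ s x, 0 ≤ n s x)
    (hn : ContinuousOn n.uncurry (Icc 0 t ×ˢ univ)) (hψ : Continuous ψ)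
    (hψs : HasCompactSupport ψ) {s : ℝ} (hs : s ∈ Ioo 0 t) :
    HasDerivWithinAt (fun s => ∫ x, (1 - Real.exp (-n s x)) * ψ x ∂μ)
      (∫ x, Real.exp (-n s x) * ψ x ∂(ν s : Measure X)) (Ioi s) s := by
  set Φ := fun s => ∫ x, (1 - Real.exp (-n s x)) * ψ x ∂μ
  set H := fun r => ∫ x, Real.exp (-n s x) * ψ x ∂(ν r : Measure X)
  have hns := hn.continuous_of_uncurry (Ioo_subset_Icc_self hs)
  have hI : HasDerivAt (fun s' => ∫ r in s..s', H r) (H s) s :=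
    ((FiniteMeasure.continuous_integral_of_hasCompactSupport hν (by fun_prop)
      hψs.mul_left).integral_hasStrictDerivAt s s).hasDerivAt
  have hrem : HasDerivWithinAt (fun s' => Φ s' - Φ s - ∫ r in s..s', H r) 0 (Ioi s) s := by
    rw [hasDerivWithinAt_iff_isLittleO]
    simpa using h.isLittleO_sub_sub_intervalIntegral hν hM hn0 hn hψ hψs hs
  have hsum := (hI.hasDerivWithinAt.add hrem).const_add (Φ s)
  have hΦ : (fun s' => Φ s + ((fun s' => ∫ r in s..s', H r)
      + fun s' => Φ s' - Φ s - ∫ r in s..s', H r) s') = Φ := by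
    funext s'; simp only [Pi.add_apply]; ring
  rwa [hΦ, add_zero] at hsum

theorem integral_one_sub_exp_neg_mul_eq (h : IsOccupationDensity μ ν n t) (hν : Continuous ν)
    {M : ℝ≥0} (hM : ∀ r, (ν r).mass ≤ M) (hn0 : ∀ s x, 0 ≤ n s x)
    (hn : ContinuousOn n.uncurry (Icc 0 t ×ˢ univ)) (ht : 0 ≤ t) (hψ : Continuous ψ)
    (hψs : HasCompactSupport ψ) :
    ∫ x, (1 - Real.exp (-n t x)) * ψ x ∂μ
      = ∫ s in 0..t, ∫ x, Real.exp (-n s x) * ψ x ∂(ν s : Measure X) := by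
  have hΦ0 : ∫ x, (1 - Real.exp (-n 0 x)) * ψ x ∂μ = 0 := integral_eq_zero_of_ae <| by
    filter_upwards [h.ae_eq_zero ht (hn0 0) (hn.continuous_of_uncurry ⟨le_rfl, ht⟩).measurable]
      with x hx
    simp [hx]
  rw [intervalIntegral.integral_eq_sub_of_hasDeriv_right_of_le ht
    (continuousOn_integral_one_sub_exp_neg hn0 hn hψ hψs)
    (fun s hs => h.hasDerivWithinAt_integral_one_sub_exp_neg hν hM hn0 hn hψ hψs hs)
    ((continuousOn_integral_exp_neg_mul hν hn hψ hψs).intervalIntegrable_of_Icc ht), hΦ0, sub_zero]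

end IsOccupationDensity

end Derivative

end MeasureTheory

theorem occupation_density_exp_identity (d : ℕ) (t : ℝ) (ht : 0 < t)
    (ν : ℝ → FiniteMeasure (EuclideanSpace ℝ (Fin d)))
    (hν : ContinuousOn ν (Set.Icc 0 t))
    (n : ℝ → EuclideanSpace ℝ (Fin d) → ℝ)
    (hn_nonneg : ∀ s x, 0 ≤ n s x)
    (hn_bdd : ∃ K : ℝ, ∀ s x, n s x ≤ K)
    (hn_cont : ContinuousOn (fun p : ℝ × EuclideanSpace ℝ (Fin d) => n p.1 p.2)
      (Set.Icc 0 t ×ˢ Set.univ))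
    (hdens : ∀ s ∈ Set.Icc (0:ℝ) t, ∀ A : Set (EuclideanSpace ℝ (Fin d)), MeasurableSet A →
      (∫ r in (0:ℝ)..s, ((ν r : Measure (EuclideanSpace ℝ (Fin d))) A).toReal)
        = ∫ x in A, n s x)
    (ψ : EuclideanSpace ℝ (Fin d) → ℝ)
    (hψc : Continuous ψ) (hψs : HasCompactSupport ψ) :
    ∫ x, (1 - Real.exp (-(n t x))) * ψ x
      = ∫ s in (0:ℝ)..t,
          ∫ x, Real.exp (-(n s x)) * ψ x ∂(ν s : Measure (EuclideanSpace ℝ (Fin d))) := by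
  obtain ⟨K, hK⟩ := hn_bdd
  set νc := fun r => ν (projIcc 0 t ht.le r)
  have hνc : Continuous νc := hν.comp_continuous (continuous_subtype_val.comp continuous_projIcc)
    fun r => (projIcc 0 t ht.le r).2
  have hνc_eq : EqOn νc ν (Icc 0 t) := fun r hr => by simp [νc, projIcc_of_mem ht.le hr]
  obtain ⟨M, hM⟩ : ∃ M : ℝ≥0, ∀ r, (νc r).mass ≤ M := by
    obtain ⟨M, hM⟩ := (isCompact_Icc.image_of_continuousOn
      (FiniteMeasure.continuous_mass.comp_continuousOn hν)).bddAbove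
    exact ⟨M, fun r => hM ⟨_, (projIcc 0 t ht.le r).2, rfl⟩⟩
  have hocc : IsOccupationDensity volume νc n t := fun s hs =>
    withDensity_ofReal_eq_occupationMeasure (FiniteMeasure.measurable_coe_of_continuous hνc) hM
      hs.1 (hn_cont.continuous_of_uncurry hs).measurable (hn_nonneg s) (hK s) fun A hA _ => by
        rw [← hdens s hs A hA]
        refine intervalIntegral.integral_congr fun r hr => ?_
        rw [uIcc_of_le hs.1] at hr
        simp only [hνc_eq ⟨hr.1, hr.2.trans hs.2⟩]
  rw [hocc.integral_one_sub_exp_neg_mul_eq hνc hM hn_nonneg hn_cont ht.le hψc hψs]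
  refine intervalIntegral.integral_congr fun s hs => ?_
  rw [uIcc_of_le ht.le] at hs
  simp only [hνc_eq hs]
end

section
/- For every d ≥ 1 and every T > 0 there exists a constant C = C(d,T) < ∞ such that for all t ∈ (0,T] and all x, y, z ∈ ℝ^d with x ≠ z and ‖x−z‖ ≥ 2‖x−y‖, one has |G_{[0,t]}(x−z) − G_{[0,t]}(y−z)| ≤ C ‖x−y‖ (1 + ‖x−z‖^{1−d}). -/
/-!
Since `‖y - z‖ ≥ ‖x - z‖ / 2`, both Gaussian factors are at most `exp (-‖x - z‖² / (16 s))`,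
so the mean value bound for `exp` gives, with `k = d / 2`,
`|p_s(x - z) - p_s(y - z)| ≤ (4π)^(-k) (5/8) ‖x - y‖ ‖x - z‖ s^(-k-1) exp (-‖x - z‖² / (16 s))`.
Integrating over all `s > 0` instead of `(0, t]` and substituting `u = 1 / s` turns the right
side into a Gamma integral, equal to `Γ(k) (‖x - z‖² / 16)^(-k)`; this produces the factor
`‖x - z‖^(1-d)`, uniformly in `t`.
-/

open Real MeasureTheory Set

/-- The substitution `u = s⁻¹`, in the shape of `integral_comp_rpow_Ioi` with `p = -1`. -/
lemma rpow_neg_sub_one_mul_exp_neg_div_eq {k c s : ℝ} (hs : 0 < s) :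
    s ^ (-k - 1) * exp (-(c / s)) =
      s ^ ((-1 : ℝ) - 1) * ((s ^ (-1 : ℝ)) ^ (k - 1) * exp (-(c * s ^ (-1 : ℝ)))) := by
  rw [rpow_neg_one, ← mul_assoc, inv_rpow hs.le, ← rpow_neg hs.le, ← rpow_add hs,
    div_eq_mul_inv]
  ring_nf

theorem integrableOn_rpow_mul_exp_neg_div_Ioi {k c : ℝ} (hk : 0 < k) (hc : 0 < c) :
    IntegrableOn (fun s : ℝ => s ^ (-k - 1) * exp (-(c / s))) (Ioi 0) := by
  have h_gamma : IntegrableOn (fun u : ℝ => u ^ (k - 1) * exp (-(c * u))) (Ioi 0) := by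
    simpa only [rpow_one, neg_mul] using
      integrableOn_rpow_mul_exp_neg_mul_rpow (by linarith) one_pos hc
  exact ((integrableOn_Ioi_comp_rpow_iff' _ (by norm_num : (-1 : ℝ) ≠ 0)).mpr h_gamma).congr_fun
    (fun s hs => (rpow_neg_sub_one_mul_exp_neg_div_eq hs).symm) measurableSet_Ioi

theorem integral_rpow_mul_exp_neg_div_Ioi {k c : ℝ} (hk : 0 < k) (hc : 0 < c) :
    ∫ s in Ioi (0 : ℝ), s ^ (-k - 1) * exp (-(c / s)) = c ^ (-k) * Gamma k := by
  have h := integral_comp_rpow_Ioi (fun u : ℝ => u ^ (k - 1) * exp (-(c * u)))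
    (by norm_num : (-1 : ℝ) ≠ 0)
  rw [integral_rpow_mul_exp_neg_mul_Ioi hk hc, one_div, inv_rpow hc.le, ← rpow_neg hc.le] at h
  rw [← h]
  refine setIntegral_congr_fun measurableSet_Ioi (fun s hs => ?_)
  simp only [smul_eq_mul, abs_neg, abs_one, one_mul]
  exact rpow_neg_sub_one_mul_exp_neg_div_eq hs

lemma abs_exp_neg_sub_exp_neg_le {a b m : ℝ} (ha : m ≤ a) (hb : m ≤ b) :
    |exp (-a) - exp (-b)| ≤ exp (-m) * |a - b| := by
  wlog hba : b ≤ a generalizing a b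
  · rw [abs_sub_comm, abs_sub_comm a]
    exact this hb ha (le_of_not_ge hba)
  have h_exp : 1 - exp (b - a) ≤ a - b := by linarith [add_one_le_exp (b - a)]
  have h_split : exp (-b) - exp (-a) = exp (-b) * (1 - exp (b - a)) := by
    rw [mul_sub, mul_one, ← exp_add]
    ring_nf
  rw [abs_sub_comm, abs_of_nonneg (by linarith [exp_le_exp.2 (neg_le_neg hba)]),
    abs_of_nonneg (by linarith), h_split]
  exact mul_le_mul (exp_le_exp.2 (by linarith)) h_exp
    (by linarith [exp_le_one_iff.2 (by linarith : b - a ≤ 0)]) (exp_pos _).le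

lemma abs_sq_sub_sq_le {a b δ : ℝ} (hab : |a - b| ≤ δ) (ha : 2 * δ ≤ a) :
    |a ^ 2 - b ^ 2| ≤ 5 / 2 * δ * a := by
  obtain ⟨h_lo, h_hi⟩ := abs_le.1 hab
  rw [sq_sub_sq, abs_mul, abs_of_nonneg (by linarith : 0 ≤ a + b)]
  nlinarith [abs_nonneg (a - b)]

noncomputable def radialHeatKernel (d : ℕ) (r s : ℝ) : ℝ :=
  (4 * π * s) ^ (-(d : ℝ) / 2) * exp (-r ^ 2 / (4 * s))

lemma radialHeatKernel_eq_of_pos {d : ℕ} {r s : ℝ} (hs : 0 < s) :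
    radialHeatKernel d r s =
      (4 * π) ^ (-(d : ℝ) / 2) * (s ^ (-(d : ℝ) / 2) * exp (-(r ^ 2 / 4 / s))) := by
  rw [radialHeatKernel, mul_rpow (by positivity) hs.le, mul_assoc]
  congr 3
  field_simp

lemma measurable_radialHeatKernel (d : ℕ) (r : ℝ) : Measurable (radialHeatKernel d r) := by
  unfold radialHeatKernel
  fun_prop

lemma integrableOn_radialHeatKernel {d : ℕ} (hd : 0 < d) {r : ℝ} (hr : r ≠ 0) (t : ℝ) :
    IntegrableOn (radialHeatKernel d r) (Ioc 0 t) := by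
  have h_dom : IntegrableOn (fun s => (4 * π) ^ (-(d : ℝ) / 2) * t *
      (s ^ (-((d : ℝ) / 2) - 1) * exp (-(r ^ 2 / 4 / s)))) (Ioc 0 t) :=
    ((integrableOn_rpow_mul_exp_neg_div_Ioi (by positivity) (by positivity)).mono_set
      Ioc_subset_Ioi_self).const_mul _
  refine h_dom.mono' (measurable_radialHeatKernel d r).aestronglyMeasurable ?_
  filter_upwards [ae_restrict_mem measurableSet_Ioc] with s ⟨hs, hst⟩
  have h_pow : s ^ (-(d : ℝ) / 2) ≤ t * s ^ (-((d : ℝ) / 2) - 1) := by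
    rw [rpow_sub_one hs.ne', mul_div_assoc', le_div_iff₀ hs, mul_comm, neg_div]
    gcongr
  rw [radialHeatKernel_eq_of_pos hs, norm_of_nonneg (by positivity), mul_assoc]
  refine mul_le_mul_of_nonneg_left ?_ (by positivity)
  rw [← mul_assoc]
  exact mul_le_mul_of_nonneg_right h_pow (exp_pos _).le

lemma abs_radialHeatKernel_sub_le {d : ℕ} {r₁ r₂ c s : ℝ} (hs : 0 < s)
    (h₁ : 4 * c ≤ r₁ ^ 2) (h₂ : 4 * c ≤ r₂ ^ 2) :
    |radialHeatKernel d r₁ s - radialHeatKernel d r₂ s| ≤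
      (4 * π) ^ (-(d : ℝ) / 2) * (|r₁ ^ 2 - r₂ ^ 2| / 4) *
        (s ^ (-((d : ℝ) / 2) - 1) * exp (-(c / s))) := by
  have h_exp := abs_exp_neg_sub_exp_neg_le (a := r₁ ^ 2 / 4 / s) (b := r₂ ^ 2 / 4 / s)
    (m := c / s) (by gcongr; linarith) (by gcongr; linarith)
  have h_diff : |r₁ ^ 2 / 4 / s - r₂ ^ 2 / 4 / s| = |r₁ ^ 2 - r₂ ^ 2| / 4 * s⁻¹ := by
    rw [← sub_div, ← sub_div, abs_div, abs_div, abs_of_pos hs,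
      abs_of_pos (four_pos : (0 : ℝ) < 4), div_eq_mul_inv]
  have h_pow : s ^ (-((d : ℝ) / 2) - 1) = s ^ (-(d : ℝ) / 2) * s⁻¹ := by
    rw [rpow_sub_one hs.ne', neg_div, div_eq_mul_inv]
  rw [radialHeatKernel_eq_of_pos hs, radialHeatKernel_eq_of_pos hs, ← mul_sub, ← mul_sub,
    abs_mul, abs_mul, abs_of_pos (by positivity), abs_of_pos (by positivity), h_pow]
  calc (4 * π) ^ (-(d : ℝ) / 2) * (s ^ (-(d : ℝ) / 2) *
        |exp (-(r₁ ^ 2 / 4 / s)) - exp (-(r₂ ^ 2 / 4 / s))|)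
      ≤ (4 * π) ^ (-(d : ℝ) / 2) * (s ^ (-(d : ℝ) / 2) *
        (exp (-(c / s)) * (|r₁ ^ 2 - r₂ ^ 2| / 4 * s⁻¹))) := by
        rw [← h_diff]
        gcongr
    _ = _ := by ring

theorem abs_integral_radialHeatKernel_sub_le {d : ℕ} (hd : 0 < d) {r₁ r₂ c t : ℝ} (hc : 0 < c)
    (h₁ : 4 * c ≤ r₁ ^ 2) (h₂ : 4 * c ≤ r₂ ^ 2) (ht : 0 ≤ t) :
    |(∫ s in (0 : ℝ)..t, radialHeatKernel d r₁ s) -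
        ∫ s in (0 : ℝ)..t, radialHeatKernel d r₂ s| ≤
      (4 * π) ^ (-(d : ℝ) / 2) * (|r₁ ^ 2 - r₂ ^ 2| / 4) *
        (c ^ (-((d : ℝ) / 2)) * Gamma (d / 2)) := by
  have h_ne {r : ℝ} (h : 4 * c ≤ r ^ 2) : r ≠ 0 := by
    rintro rfl
    linarith [zero_pow two_ne_zero (M₀ := ℝ)]
  have hA := integrableOn_radialHeatKernel hd (h_ne h₁) t
  have hB := integrableOn_radialHeatKernel hd (h_ne h₂) t
  have h_dom : IntegrableOn (fun s => (4 * π) ^ (-(d : ℝ) / 2) * (|r₁ ^ 2 - r₂ ^ 2| / 4) *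
      (s ^ (-((d : ℝ) / 2) - 1) * exp (-(c / s)))) (Ioi 0) :=
    (integrableOn_rpow_mul_exp_neg_div_Ioi (by positivity) hc).const_mul _
  rw [intervalIntegral.integral_of_le ht, intervalIntegral.integral_of_le ht,
    ← integral_sub hA hB, ← integral_rpow_mul_exp_neg_div_Ioi (by positivity) hc,
    ← integral_const_mul]
  calc _ ≤ ∫ s in Ioc 0 t, |radialHeatKernel d r₁ s - radialHeatKernel d r₂ s| :=
        abs_integral_le_integral_abs
    _ ≤ _ := setIntegral_mono_on (hA.sub hB).abs (h_dom.mono_set Ioc_subset_Ioi_self)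
          measurableSet_Ioc (fun s hs => abs_radialHeatKernel_sub_le hs.1 h₁ h₂)
    _ ≤ _ := setIntegral_mono_set h_dom
          ((ae_restrict_mem measurableSet_Ioi).mono fun s (hs : 0 < s) => by positivity)
          Ioc_subset_Ioi_self.eventuallyLE

theorem heat_kernel_space_increment_bound_general (d : ℕ) (hd : 1 ≤ d) (T : ℝ) :
    ∃ C : ℝ, ∀ t ∈ Set.Ioc (0:ℝ) T, ∀ x y z : EuclideanSpace ℝ (Fin d),
      x ≠ z → 2 * ‖x - y‖ ≤ ‖x - z‖ →
      |(∫ s in (0:ℝ)..t, (4 * π * s) ^ (-(d:ℝ)/2) * Real.exp (-‖x - z‖^2 / (4 * s)))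
        - (∫ s in (0:ℝ)..t, (4 * π * s) ^ (-(d:ℝ)/2) * Real.exp (-‖y - z‖^2 / (4 * s)))|
        ≤ C * ‖x - y‖ * (1 + ‖x - z‖ ^ ((1:ℝ) - d)) := by
  refine ⟨(4 * π) ^ (-(d : ℝ) / 2) * (5 / 8) * 4 ^ d * Gamma (d / 2), ?_⟩
  rintro t ⟨ht, -⟩ x y z hxz hsep
  set r := ‖x - z‖
  have hr : 0 < r := norm_pos_iff.2 (sub_ne_zero.2 hxz)
  have h_close : |r - ‖y - z‖| ≤ ‖x - y‖ := by
    simpa using abs_norm_sub_norm_le (x - z) (y - z)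
  have h_pow : ((r / 4) ^ 2) ^ (-((d : ℝ) / 2)) * r = 4 ^ d * r ^ ((1 : ℝ) - d) := by
    rw [← rpow_natCast_mul (by positivity), Nat.cast_two,
      show (2 : ℝ) * -((d : ℝ) / 2) = -d by ring, div_rpow hr.le (by norm_num), rpow_sub hr,
      rpow_one, rpow_neg hr.le, rpow_neg (by norm_num), rpow_natCast, rpow_natCast]
    field_simp
  calc _ ≤ (4 * π) ^ (-(d : ℝ) / 2) * (|r ^ 2 - ‖y - z‖ ^ 2| / 4) *
        (((r / 4) ^ 2) ^ (-((d : ℝ) / 2)) * Gamma (d / 2)) :=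
        abs_integral_radialHeatKernel_sub_le hd (by positivity) (by nlinarith)
          (by nlinarith [abs_le.1 h_close]) ht.le
    _ ≤ (4 * π) ^ (-(d : ℝ) / 2) * (5 / 8 * ‖x - y‖ * r) *
        (((r / 4) ^ 2) ^ (-((d : ℝ) / 2)) * Gamma (d / 2)) := by
        gcongr
        linarith [abs_sq_sub_sq_le h_close hsep]
    _ = (4 * π) ^ (-(d : ℝ) / 2) * (5 / 8) * 4 ^ d * Gamma (d / 2) * ‖x - y‖ *
        r ^ ((1 : ℝ) - d) := by
      linear_combination (4 * π) ^ (-(d : ℝ) / 2) * (5 / 8) * ‖x - y‖ * Gamma (d / 2) * h_pow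
    _ ≤ _ := by gcongr; linarith

theorem heat_kernel_space_increment_bound (d : ℕ) (hd : 1 ≤ d) (T : ℝ) (hT : 0 < T) :
    ∃ C : ℝ, ∀ t ∈ Set.Ioc (0:ℝ) T, ∀ x y z : EuclideanSpace ℝ (Fin d),
      x ≠ z → 2 * ‖x - y‖ ≤ ‖x - z‖ →
      |(∫ s in (0:ℝ)..t, (4 * π * s) ^ (-(d:ℝ)/2) * Real.exp (-‖x - z‖^2 / (4 * s)))
        - (∫ s in (0:ℝ)..t, (4 * π * s) ^ (-(d:ℝ)/2) * Real.exp (-‖y - z‖^2 / (4 * s)))|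
        ≤ C * ‖x - y‖ * (1 + ‖x - z‖ ^ ((1:ℝ) - d)) :=
  heat_kernel_space_increment_bound_general d hd T
end

section
/- For every d ≥ 1 and γ > 0 there exists a constant C = C(γ,d) < ∞ such that for every bounded continuous φ : ℝ^d → [0,∞) and every x ∈ ℝ^d, sup_{t>0} e^{−γt} ∫_{ℝ^d} (4πt)^{−d/2} exp(−‖y‖²/(4t)) φ(x+y) dy ≤ sup{ φ(z) : ‖z−x‖ ≤ 1 } + C ∫_{ℝ^d} φ(x+y) exp(−√γ ‖y‖) dy. -/
/-!
Completing the square, `γ t + ‖y‖² / (4t) = (‖y‖ - 2√γ t)² / (4t) + √γ ‖y‖`, so the killed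
kernel `e^{-γt} p_t(y)` equals `e^{-√γ‖y‖}` times `(4πt)^{-d/2} e^{-(‖y‖ - 2√γ t)² / (4t)}`.
For `‖y‖ ≥ 1` the latter is bounded uniformly in `t`: for `t ≥ 1/(4√γ)` by its prefactor, and
for smaller `t` because then `‖y‖ - 2√γ t ≥ 1/2`, leaving `t^{-d/2} e^{-1/(16t)}`. On the unit
ball one bounds `φ` by its supremum there and uses that `p_t` has total mass one.
-/

open Real MeasureTheory

lemma rpow_mul_exp_neg_le {r u : ℝ} (hr : 0 ≤ r) (hu : 0 ≤ u) :
    u ^ r * exp (-u) ≤ (r + 1) ^ r := by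
  have hr1 : 0 < r + 1 := by linarith
  have h1 : u / (r + 1) ≤ exp (u / (r + 1)) := by linarith [add_one_le_exp (u / (r + 1))]
  have h2 : exp (u / (r + 1)) ^ r ≤ exp u := by
    rw [← exp_mul, exp_le_exp, div_mul_eq_mul_div, div_le_iff₀ hr1]
    nlinarith
  have h3 : u ^ r / (r + 1) ^ r ≤ exp u := by
    rw [← div_rpow hu hr1.le]
    exact (rpow_le_rpow (by positivity) h1 hr).trans h2
  rw [div_le_iff₀ (by positivity)] at h3
  rw [exp_neg, ← div_eq_mul_inv, div_le_iff₀ (exp_pos u)]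
  linarith

lemma integrable_exp_neg_mul_norm {E : Type*} [NormedAddCommGroup E] [NormedSpace ℝ E]
    [FiniteDimensional ℝ E] [MeasurableSpace E] [BorelSpace E] (μ : Measure E)
    [μ.IsAddHaarMeasure] {c : ℝ} (hc : 0 < c) :
    Integrable (fun x : E ↦ exp (-c * ‖x‖)) μ := by
  set r : ℝ := Module.finrank ℝ E + 1
  have hr : 0 ≤ r := by positivity
  refine ((integrable_one_add_norm (μ := μ) (r := r) (by linarith)).const_mul
    (exp c * (r + 1) ^ r * c ^ (-r))).mono' (by fun_prop) (.of_forall fun x ↦ ?_)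
  have hx : 0 < 1 + ‖x‖ := by positivity
  have hdecay := rpow_mul_exp_neg_le hr (mul_pos hc hx).le
  rw [mul_rpow hc.le hx.le] at hdecay
  rw [norm_of_nonneg (exp_pos _).le, show -c * ‖x‖ = c + -(c * (1 + ‖x‖)) by ring, exp_add,
    rpow_neg hc.le, rpow_neg hx.le]
  have hcr : 0 < c ^ r := by positivity
  have hxr : 0 < (1 + ‖x‖) ^ r := by positivity
  rw [show exp c * (r + 1) ^ r * (c ^ r)⁻¹ * ((1 + ‖x‖) ^ r)⁻¹
    = exp c * ((r + 1) ^ r / (c ^ r * (1 + ‖x‖) ^ r)) by field_simp]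
  gcongr
  rw [le_div_iff₀ (by positivity)]
  linarith

noncomputable def heatKernel (d : ℕ) (t : ℝ) (y : EuclideanSpace ℝ (Fin d)) : ℝ :=
  (4 * π * t) ^ (-(d:ℝ)/2) * exp (-‖y‖^2 / (4 * t))

namespace heatKernel

variable {d : ℕ} {t : ℝ}

lemma nonneg (ht : 0 ≤ t) (y : EuclideanSpace ℝ (Fin d)) : 0 ≤ heatKernel d t y := by
  unfold heatKernel; positivity

lemma integral_eq_one (ht : 0 < t) : ∫ y, heatKernel d t y = 1 := by
  have hb : 0 < (4 * t)⁻¹ := by positivity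
  simp_rw [heatKernel, neg_div, div_eq_inv_mul (‖_‖ ^ 2), ← neg_mul]
  rw [integral_const_mul, GaussianFourier.integral_rexp_neg_mul_sq_norm hb,
    finrank_euclideanSpace_fin, show π / (4 * t)⁻¹ = 4 * π * t by field_simp,
    ← rpow_add (by positivity), neg_add_cancel, rpow_zero]

lemma integrable (ht : 0 < t) : Integrable (heatKernel d t) :=
  .of_integral_ne_zero (by rw [integral_eq_one ht]; exact one_ne_zero)

lemma exp_neg_mul_eq {γ : ℝ} (hγ : 0 ≤ γ) (ht : t ≠ 0) (y : EuclideanSpace ℝ (Fin d)) :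
    exp (-γ * t) * heatKernel d t y =
      (4 * π * t) ^ (-(d:ℝ)/2) * exp (-(‖y‖ - 2 * √γ * t) ^ 2 / (4 * t)) * exp (-√γ * ‖y‖) := by
  have hsq : -γ * t + -‖y‖ ^ 2 / (4 * t) = -(‖y‖ - 2 * √γ * t) ^ 2 / (4 * t) + -√γ * ‖y‖ := by
    field_simp
    linear_combination (4 * t ^ 2) * sq_sqrt hγ
  rw [heatKernel, mul_left_comm, ← exp_add, hsq, exp_add]
  ring

end heatKernel

lemma exists_rpow_mul_exp_neg_sq_div_le (d : ℕ) {a : ℝ} (ha : 0 < a) :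
    ∃ C, 0 ≤ C ∧ ∀ t > 0, ∀ s ≥ 1,
      (4 * π * t) ^ (-(d:ℝ)/2) * exp (-(s - 2 * a * t) ^ 2 / (4 * t)) ≤ C := by
  refine ⟨max ((π / a) ^ (-(d:ℝ)/2)) ((π / 4) ^ (-(d:ℝ)/2) * ((d:ℝ)/2 + 1) ^ ((d:ℝ)/2)),
    by positivity, fun t ht s hs ↦ ?_⟩
  have hd : -(d:ℝ)/2 ≤ 0 := by have := d.cast_nonneg (α := ℝ); linarith
  rcases le_total (1 / (4 * a)) t with hlarge | hsmall
  · refine le_max_of_le_left ?_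
    have hexp : exp (-(s - 2 * a * t) ^ 2 / (4 * t)) ≤ 1 :=
      exp_le_one_iff.mpr (div_nonpos_of_nonpos_of_nonneg (by nlinarith) (by positivity))
    have hπ : π / a ≤ 4 * π * t := by
      rw [div_le_iff₀ ha]; rw [div_le_iff₀ (by positivity)] at hlarge; nlinarith [pi_pos]
    calc _ ≤ (4 * π * t) ^ (-(d:ℝ)/2) * 1 := by gcongr
      _ ≤ (π / a) ^ (-(d:ℝ)/2) := by rw [mul_one]; exact rpow_le_rpow_of_nonpos (by positivity) hπ hd
  · refine le_max_of_le_right ?_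
    have hat : 4 * a * t ≤ 1 := by rw [le_div_iff₀ (by positivity)] at hsmall; linarith
    have hexp : exp (-(s - 2 * a * t) ^ 2 / (4 * t)) ≤ exp (-(16 * t)⁻¹) := by
      rw [exp_le_exp, neg_div, neg_le_neg_iff, le_div_iff₀ (by positivity)]
      field_simp
      nlinarith
    have hsplit : (4 * π * t) ^ (-(d:ℝ)/2) = (π / 4) ^ (-(d:ℝ)/2) * (16 * t)⁻¹ ^ ((d:ℝ)/2) := by
      rw [show 4 * π * t = π / 4 * (16 * t) by ring, mul_rpow (by positivity) (by positivity),
        inv_rpow (by positivity), ← rpow_neg (by positivity), neg_div]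
    calc _ ≤ (4 * π * t) ^ (-(d:ℝ)/2) * exp (-(16 * t)⁻¹) := by gcongr
      _ = (π / 4) ^ (-(d:ℝ)/2) * ((16 * t)⁻¹ ^ ((d:ℝ)/2) * exp (-(16 * t)⁻¹)) := by
        rw [hsplit, mul_assoc]
      _ ≤ _ := by gcongr; exact rpow_mul_exp_neg_le (by positivity) (by positivity)

lemma exists_exp_neg_mul_heatKernel_le (d : ℕ) {γ : ℝ} (hγ : 0 < γ) :
    ∃ C, 0 ≤ C ∧ ∀ t > 0, ∀ y : EuclideanSpace ℝ (Fin d), 1 ≤ ‖y‖ →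
      exp (-γ * t) * heatKernel d t y ≤ C * exp (-√γ * ‖y‖) := by
  obtain ⟨C, hC0, hC⟩ := exists_rpow_mul_exp_neg_sq_div_le d (sqrt_pos.mpr hγ)
  refine ⟨C, hC0, fun t ht y hy ↦ ?_⟩
  rw [heatKernel.exp_neg_mul_eq hγ.le ht.ne']
  gcongr
  exact hC t ht ‖y‖ hy

lemma exp_neg_mul_integral_heatKernel_mul_le {d : ℕ} {γ t S C : ℝ}
    {f : EuclideanSpace ℝ (Fin d) → ℝ} (hγ : 0 ≤ γ) (ht : 0 < t) (hf0 : ∀ y, 0 ≤ f y)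
    (hfS : ∀ y, ‖y‖ ≤ 1 → f y ≤ S) (hC0 : 0 ≤ C)
    (hC : ∀ y, 1 ≤ ‖y‖ → exp (-γ * t) * heatKernel d t y ≤ C * exp (-√γ * ‖y‖))
    (hf : Integrable fun y ↦ f y * exp (-√γ * ‖y‖)) :
    exp (-γ * t) * ∫ y, heatKernel d t y * f y ≤ S + C * ∫ y, f y * exp (-√γ * ‖y‖) := by
  have hk := heatKernel.nonneg (d := d) ht.le
  have hS0 : 0 ≤ S := (hf0 0).trans (hfS 0 (by simp))
  have hpt : ∀ y, exp (-γ * t) * (heatKernel d t y * f y)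
      ≤ S * heatKernel d t y + C * (f y * exp (-√γ * ‖y‖)) := by
    intro y
    have := hf0 y
    have := hk y
    rcases le_total ‖y‖ 1 with hnear | hfar
    · have hexp : exp (-γ * t) ≤ 1 := exp_le_one_iff.mpr (by nlinarith)
      calc exp (-γ * t) * (heatKernel d t y * f y) ≤ 1 * (heatKernel d t y * S) := by
            gcongr; exact hfS y hnear
        _ ≤ _ := by rw [one_mul, mul_comm]; exact le_add_of_nonneg_right (by positivity)
    · calc exp (-γ * t) * (heatKernel d t y * f y) = exp (-γ * t) * heatKernel d t y * f y := by
            ring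
        _ ≤ C * exp (-√γ * ‖y‖) * f y := mul_le_mul_of_nonneg_right (hC y hfar) (hf0 y)
        _ ≤ _ := by
            rw [mul_assoc, mul_comm (exp _)]
            exact le_add_of_nonneg_left (by positivity)
  calc exp (-γ * t) * ∫ y, heatKernel d t y * f y
      = ∫ y, exp (-γ * t) * (heatKernel d t y * f y) := (integral_const_mul _ _).symm
    _ ≤ ∫ y, (S * heatKernel d t y + C * (f y * exp (-√γ * ‖y‖))) :=
        integral_mono_of_nonneg (.of_forall fun y ↦ by have := hf0 y; have := hk y; positivity)
          (((heatKernel.integrable ht).const_mul S).add (hf.const_mul C)) (.of_forall hpt)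
    _ = S + C * ∫ y, f y * exp (-√γ * ‖y‖) := by
        rw [integral_add ((heatKernel.integrable ht).const_mul S) (hf.const_mul C),
          integral_const_mul, integral_const_mul, heatKernel.integral_eq_one ht, mul_one]

theorem killed_heat_semigroup_sup_bound_general (d : ℕ) (γ : ℝ) (hγ : 0 < γ) :
    ∃ C : ℝ, ∀ φ : EuclideanSpace ℝ (Fin d) → ℝ,
      Continuous φ → (∀ z, 0 ≤ φ z) → (∃ K : ℝ, ∀ z, φ z ≤ K) →
      ∀ x : EuclideanSpace ℝ (Fin d), ∀ t : ℝ, 0 < t →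
        Real.exp (-γ * t) *
            (∫ y : EuclideanSpace ℝ (Fin d),
              (4 * π * t) ^ (-(d:ℝ)/2) * Real.exp (-‖y‖^2 / (4 * t)) * φ (x + y))
          ≤ sSup (φ '' Metric.closedBall x 1)
            + C * ∫ y : EuclideanSpace ℝ (Fin d),
                φ (x + y) * Real.exp (-Real.sqrt γ * ‖y‖) := by
  obtain ⟨C, hC0, hC⟩ := exists_exp_neg_mul_heatKernel_le d hγ
  refine ⟨C, fun φ hφ hφ0 ⟨K, hK⟩ x t ht ↦ ?_⟩
  have hbdd : BddAbove (φ '' Metric.closedBall x 1) := ⟨K, by rintro _ ⟨z, -, rfl⟩; exact hK z⟩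
  have hint : Integrable fun y ↦ φ (x + y) * exp (-√γ * ‖y‖) :=
    (integrable_exp_neg_mul_norm volume (sqrt_pos.mpr hγ)).bdd_mul (c := K) (by fun_prop)
      (.of_forall fun y ↦ by rw [norm_of_nonneg (hφ0 _)]; exact hK _)
  exact exp_neg_mul_integral_heatKernel_mul_le (f := fun y ↦ φ (x + y)) hγ.le ht
    (fun y ↦ hφ0 _)
    (fun y hy ↦ le_csSup hbdd ⟨x + y, by simpa [dist_eq_norm] using hy, rfl⟩) hC0 (hC t ht) hint

theorem killed_heat_semigroup_sup_bound (d : ℕ) (hd : 1 ≤ d) (γ : ℝ) (hγ : 0 < γ) :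
    ∃ C : ℝ, ∀ φ : EuclideanSpace ℝ (Fin d) → ℝ,
      Continuous φ → (∀ z, 0 ≤ φ z) → (∃ K : ℝ, ∀ z, φ z ≤ K) →
      ∀ x : EuclideanSpace ℝ (Fin d), ∀ t : ℝ, 0 < t →
        Real.exp (-γ * t) *
            (∫ y : EuclideanSpace ℝ (Fin d),
              (4 * π * t) ^ (-(d:ℝ)/2) * Real.exp (-‖y‖^2 / (4 * t)) * φ (x + y))
          ≤ sSup (φ '' Metric.closedBall x 1)
            + C * ∫ y : EuclideanSpace ℝ (Fin d),
                φ (x + y) * Real.exp (-Real.sqrt γ * ‖y‖) :=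
  killed_heat_semigroup_sup_bound_general d γ hγ
end

section
/- Fix d ≥ 1 and define w : (−3,3)^d → ℝ by w(x) = 12 ∑_{i=1}^d ( (x_i + 3)^{−2} + (3 − x_i)^{−2} ). Then w is smooth on (−3,3)^d, w(x) → ∞ as x approaches the boundary of (−3,3)^d, and Δw(x) ≤ w(x)²/2 for every x ∈ (−3,3)^d, where Δw = ∑_{i=1}^d ∂²w/∂x_i² is the Laplacian. -/
open Filter

/-- The Laplacian of `f : ℝ^d → ℝ` at `x`: the sum of the pure second partial
derivatives in the coordinate directions. -/
noncomputable def laplacian {d : ℕ} (f : EuclideanSpace ℝ (Fin d) → ℝ)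
    (x : EuclideanSpace ℝ (Fin d)) : ℝ :=
  ∑ i : Fin d, deriv (deriv (fun s : ℝ => f (x + s • EuclideanSpace.single i (1:ℝ)))) 0

/-- The open cube `(-3,3)^d`. -/
def cube3 (d : ℕ) : Set (EuclideanSpace ℝ (Fin d)) :=
  {x | ∀ i : Fin d, x i ∈ Set.Ioo (-3 : ℝ) 3}

/-- `w(x) = 12 ∑_i ((x_i+3)^{-2} + (3-x_i)^{-2})`. -/
noncomputable def wCube (d : ℕ) (x : EuclideanSpace ℝ (Fin d)) : ℝ :=
  12 * ∑ i : Fin d, (((x i + 3)^2)⁻¹ + ((3 - x i)^2)⁻¹)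


noncomputable def gfun : ℝ → ℝ := fun t => 12 * (((t+3)^2)⁻¹ + ((3-t)^2)⁻¹)
noncomputable def gfun' : ℝ → ℝ := fun t => 12 * (-2*((t+3)^3)⁻¹ + 2*((3-t)^3)⁻¹)
noncomputable def gfun'' : ℝ → ℝ := fun t => 72 * (((t+3)^4)⁻¹ + ((3-t)^4)⁻¹)

lemma hasDerivAt_gfun {t : ℝ} (ha : t + 3 ≠ 0) (hb : 3 - t ≠ 0) :
    HasDerivAt gfun (gfun' t) t := by
  have h1 : HasDerivAt (fun t : ℝ => (t+3)^2) (2*(t+3)) t := by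
    simpa using ((hasDerivAt_id t).add_const 3).fun_pow 2
  have h2 : HasDerivAt (fun t : ℝ => (3-t)^2) (2*(3-t)*(-1)) t := by
    simpa using ((hasDerivAt_id t).const_sub 3).fun_pow 2
  have h1' := h1.inv (pow_ne_zero 2 ha)
  have h2' := h2.inv (pow_ne_zero 2 hb)
  have h := (h1'.add h2').const_mul 12
  refine h.congr_deriv ?_
  unfold gfun'
  field_simp

lemma hasDerivAt_gfun' {t : ℝ} (ha : t + 3 ≠ 0) (hb : 3 - t ≠ 0) :
    HasDerivAt gfun' (gfun'' t) t := by
  have h1 : HasDerivAt (fun t : ℝ => (t+3)^3) (3*(t+3)^2) t := by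
    simpa using ((hasDerivAt_id t).add_const 3).fun_pow 3
  have h2 : HasDerivAt (fun t : ℝ => (3-t)^3) (3*(3-t)^2*(-1)) t := by
    simpa using ((hasDerivAt_id t).const_sub 3).fun_pow 3
  have h1' := (h1.inv (pow_ne_zero 3 ha)).const_mul (-2 : ℝ)
  have h2' := (h2.inv (pow_ne_zero 3 hb)).const_mul (2 : ℝ)
  have h := (h1'.add h2').const_mul 12
  refine h.congr_deriv ?_
  unfold gfun''
  field_simp
  ring

lemma slice_eq (d : ℕ) (x : EuclideanSpace ℝ (Fin d)) (i : Fin d) (s : ℝ) :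
    wCube d (x + s • EuclideanSpace.single i (1:ℝ)) =
      gfun (x i + s) + 12 * ∑ j ∈ Finset.univ.erase i,
        (((x j + 3)^2)⁻¹ + ((3 - x j)^2)⁻¹) := by
  have hc : ∀ j, (x + s • EuclideanSpace.single i (1:ℝ)) j
      = x j + s * (if j = i then 1 else 0) := by
    intro j
    simp [EuclideanSpace.single_apply]
  unfold wCube gfun
  rw [← Finset.add_sum_erase _ _ (Finset.mem_univ i), mul_add]
  congr 1
  · rw [hc i]; simp
  · congr 1
    apply Finset.sum_congr rfl
    intro j hj
    rw [hc j, if_neg (Finset.ne_of_mem_erase hj)]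
    ring_nf

lemma deriv_deriv_slice (d : ℕ) (x : EuclideanSpace ℝ (Fin d)) (i : Fin d)
    (hx : x i ∈ Set.Ioo (-3:ℝ) 3) :
    deriv (deriv (fun s : ℝ => wCube d (x + s • EuclideanSpace.single i (1:ℝ)))) 0
      = gfun'' (x i) := by
  set a := x i with ha
  set C := 12 * ∑ j ∈ Finset.univ.erase i, (((x j + 3)^2)⁻¹ + ((3 - x j)^2)⁻¹) with hC
  have hfe : (fun s : ℝ => wCube d (x + s • EuclideanSpace.single i (1:ℝ)))
      = fun s => gfun (a + s) + C := by
    funext s; rw [slice_eq]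
  rw [hfe]
  set S : Set ℝ := {s | a + s ∈ Set.Ioo (-3:ℝ) 3} with hS
  have hSopen : IsOpen S := isOpen_Ioo.preimage (by continuity)
  have h0S : (0:ℝ) ∈ S := by simpa [hS] using hx
  have hd1 : ∀ s ∈ S, HasDerivAt (fun s => gfun (a + s) + C) (gfun' (a + s)) s := by
    intro s hs
    have hmem : a + s ∈ Set.Ioo (-3:ℝ) 3 := hs
    have hg := hasDerivAt_gfun (t := a + s) (by linarith [hmem.1]) (by linarith [hmem.2])
    have hin : HasDerivAt (fun s : ℝ => a + s) 1 s := (hasDerivAt_id s).const_add a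
    simpa using (hg.comp s hin).add_const C
  have heq : deriv (fun s => gfun (a + s) + C) =ᶠ[nhds 0] fun s => gfun' (a + s) := by
    filter_upwards [hSopen.mem_nhds h0S] with s hs
    exact (hd1 s hs).deriv
  rw [heq.deriv_eq]
  have hg2 := hasDerivAt_gfun' (t := a) (by linarith [hx.1]) (by linarith [hx.2])
  have hin : HasDerivAt (fun s : ℝ => a + s) 1 (0:ℝ) := (hasDerivAt_id 0).const_add a
  have hg2' : HasDerivAt gfun' (gfun'' a) ((fun s : ℝ => a + s) 0) := by simpa using hg2
  have : HasDerivAt (fun s => gfun' (a + s)) (gfun'' a * 1) 0 := hg2'.comp (0:ℝ) hin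
  simpa using this.deriv

lemma smooth_part (d : ℕ) : ContDiffOn ℝ (⊤ : ℕ∞) (wCube d) (cube3 d) := by
  unfold wCube
  apply ContDiffOn.mul contDiffOn_const
  apply ContDiffOn.sum
  intro i _
  have hp : ContDiff ℝ (⊤ : ℕ∞) (fun x : EuclideanSpace ℝ (Fin d) => x i) :=
    (EuclideanSpace.proj (𝕜 := ℝ) i : EuclideanSpace ℝ (Fin d) →L[ℝ] ℝ).contDiff
  apply ContDiffOn.add
  · apply ContDiffOn.inv
    · exact (((hp.add contDiff_const).pow 2).contDiffOn)
    · intro x hx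
      have h1 := (hx i).1
      have : x i + 3 > 0 := by linarith
      positivity
  · apply ContDiffOn.inv
    · exact (((contDiff_const.sub hp).pow 2).contDiffOn)
    · intro x hx
      have h2 := (hx i).2
      have : 3 - x i > 0 := by linarith
      positivity

lemma cube_open (d : ℕ) : IsOpen (cube3 d) := by
  have : cube3 d = ⋂ i : Fin d, (fun x : EuclideanSpace ℝ (Fin d) => x i) ⁻¹' Set.Ioo (-3) 3 := by
    ext x; simp [cube3]
  rw [this]
  exact isOpen_iInter_of_finite fun i =>
    isOpen_Ioo.preimage (EuclideanSpace.proj i).continuous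

lemma wCube_lower (d : ℕ) (i : Fin d) (x : EuclideanSpace ℝ (Fin d)) :
    12 * (((x i + 3)^2)⁻¹ + ((3 - x i)^2)⁻¹) ≤ wCube d x := by
  unfold wCube
  have h : (((x i + 3)^2)⁻¹ + ((3 - x i)^2)⁻¹)
      ≤ ∑ j : Fin d, (((x j + 3)^2)⁻¹ + ((3 - x j)^2)⁻¹) := by
    apply Finset.single_le_sum (f := fun j => (((x j + 3)^2)⁻¹ + ((3 - x j)^2)⁻¹))
      (fun j _ => by positivity) (Finset.mem_univ i)
  linarith

lemma frontier_part (d : ℕ) :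
    ∀ y ∈ frontier (cube3 d), Tendsto (wCube d) (nhdsWithin y (cube3 d)) atTop := by
  intro y hy
  have hyc : ∀ i, y i ∈ Set.Icc (-3:ℝ) 3 := by
    intro i
    have hsub : cube3 d ⊆ (fun x : EuclideanSpace ℝ (Fin d) => x i) ⁻¹' Set.Icc (-3) 3 :=
      fun x hx => Set.Ioo_subset_Icc_self (hx i)
    have hclosed : IsClosed ((fun x : EuclideanSpace ℝ (Fin d) => x i) ⁻¹' Set.Icc (-3:ℝ) 3) :=
      isClosed_Icc.preimage (EuclideanSpace.proj i).continuous
    exact closure_minimal hsub hclosed hy.1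
  have hyn : y ∉ cube3 d := by
    intro hmem
    rw [(cube_open d).frontier_eq] at hy
    exact hy.2 hmem
  simp only [cube3, Set.mem_setOf_eq, not_forall] at hyn
  obtain ⟨i, hi⟩ := hyn
  have hcont : Continuous (fun x : EuclideanSpace ℝ (Fin d) => x i) :=
    (EuclideanSpace.proj i).continuous
  -- the blowing-up quantity: distance of the i-th coordinate to the violated face
  have hcase : y i = -3 ∨ y i = 3 := by
    rcases hyc i with ⟨h1, h2⟩
    simp only [Set.mem_Ioo, not_and_or, not_lt] at hi
    rcases hi with h | h
    · left; linarith
    · right; linarith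
  -- define q x = (x i + 3)^2 or (3 - x i)^2 accordingly, tendsto 𝓝[>] 0
  rcases hcase with hcase | hcase
  · have hq : Tendsto (fun x : EuclideanSpace ℝ (Fin d) => (x i + 3)^2)
        (nhdsWithin y (cube3 d)) (nhdsWithin 0 (Set.Ioi 0)) := by
      apply tendsto_nhdsWithin_of_tendsto_nhds_of_eventually_within _
      · have : Tendsto (fun x : EuclideanSpace ℝ (Fin d) => (x i + 3)^2) (nhds y)
            (nhds ((y i + 3)^2)) := by
          exact ((hcont.add continuous_const).pow 2).tendsto y
        simpa [hcase] using this.mono_left nhdsWithin_le_nhds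
      · filter_upwards [self_mem_nhdsWithin] with x hx
        have := (hx i).1
        have : x i + 3 > 0 := by linarith
        exact Set.mem_Ioi.mpr (by positivity)
    have hinv : Tendsto (fun x : EuclideanSpace ℝ (Fin d) => ((x i + 3)^2)⁻¹)
        (nhdsWithin y (cube3 d)) atTop := hq.inv_tendsto_nhdsGT_zero
    have hmain : Tendsto (fun x : EuclideanSpace ℝ (Fin d) =>
        12 * (((x i + 3)^2)⁻¹ + ((3 - x i)^2)⁻¹)) (nhdsWithin y (cube3 d)) atTop := by
      apply tendsto_atTop_mono' _ _ (hinv.const_mul_atTop (by norm_num : (0:ℝ) < 12))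
      filter_upwards [self_mem_nhdsWithin] with x hx
      have h2 : (0:ℝ) ≤ ((3 - x i)^2)⁻¹ := by positivity
      nlinarith [h2]
    apply tendsto_atTop_mono' _ _ hmain
    filter_upwards [self_mem_nhdsWithin] with x hx
    exact wCube_lower d i x
  · have hq : Tendsto (fun x : EuclideanSpace ℝ (Fin d) => (3 - x i)^2)
        (nhdsWithin y (cube3 d)) (nhdsWithin 0 (Set.Ioi 0)) := by
      apply tendsto_nhdsWithin_of_tendsto_nhds_of_eventually_within _
      · have : Tendsto (fun x : EuclideanSpace ℝ (Fin d) => (3 - x i)^2) (nhds y)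
            (nhds ((3 - y i)^2)) := by
          exact ((continuous_const.sub hcont).pow 2).tendsto y
        simpa [hcase] using this.mono_left nhdsWithin_le_nhds
      · filter_upwards [self_mem_nhdsWithin] with x hx
        have := (hx i).2
        have : 3 - x i > 0 := by linarith
        exact Set.mem_Ioi.mpr (by positivity)
    have hinv : Tendsto (fun x : EuclideanSpace ℝ (Fin d) => ((3 - x i)^2)⁻¹)
        (nhdsWithin y (cube3 d)) atTop := hq.inv_tendsto_nhdsGT_zero
    have hmain : Tendsto (fun x : EuclideanSpace ℝ (Fin d) =>
        12 * (((x i + 3)^2)⁻¹ + ((3 - x i)^2)⁻¹)) (nhdsWithin y (cube3 d)) atTop := by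
      apply tendsto_atTop_mono' _ _ (hinv.const_mul_atTop (by norm_num : (0:ℝ) < 12))
      filter_upwards [self_mem_nhdsWithin] with x hx
      have h2 : (0:ℝ) ≤ ((x i + 3)^2)⁻¹ := by positivity
      nlinarith [h2]
    apply tendsto_atTop_mono' _ _ hmain
    filter_upwards [self_mem_nhdsWithin] with x hx
    exact wCube_lower d i x


theorem cube_supersolution (d : ℕ) (hd : 1 ≤ d) :
    ContDiffOn ℝ (⊤ : ℕ∞) (wCube d) (cube3 d) ∧
    (∀ y ∈ frontier (cube3 d), Tendsto (wCube d) (nhdsWithin y (cube3 d)) atTop) ∧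
    (∀ x ∈ cube3 d, laplacian (wCube d) x ≤ (wCube d x)^2 / 2) := by
  refine ⟨smooth_part d, frontier_part d, ?_⟩
  intro x hx
  have hlap : laplacian (wCube d) x = ∑ i : Fin d, gfun'' (x i) := by
    unfold laplacian
    exact Finset.sum_congr rfl fun i _ => deriv_deriv_slice d x i (hx i)
  rw [hlap]
  set c : Fin d → ℝ := fun i => ((x i + 3)^2)⁻¹ + ((3 - x i)^2)⁻¹ with hc
  have hterm : ∀ i : Fin d, gfun'' (x i) ≤ 72 * (c i)^2 := by
    intro i
    have ha : (0:ℝ) < x i + 3 := by linarith [(hx i).1]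
    have hb : (0:ℝ) < 3 - x i := by linarith [(hx i).2]
    have h1 : ((x i + 3)^4)⁻¹ = (((x i + 3)^2)⁻¹)^2 := by
      rw [show ((x i + 3)^4 : ℝ) = ((x i + 3)^2)^2 by ring, ← inv_pow]
    have h2 : ((3 - x i)^4)⁻¹ = (((3 - x i)^2)⁻¹)^2 := by
      rw [show ((3 - x i)^4 : ℝ) = ((3 - x i)^2)^2 by ring, ← inv_pow]
    unfold gfun''
    rw [h1, h2, hc]
    have hpa : (0:ℝ) ≤ ((x i + 3)^2)⁻¹ := by positivity
    have hpb : (0:ℝ) ≤ ((3 - x i)^2)⁻¹ := by positivity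
    nlinarith [mul_nonneg hpa hpb]
  have hsum : ∑ i : Fin d, gfun'' (x i) ≤ 72 * ∑ i : Fin d, (c i)^2 := by
    rw [Finset.mul_sum]
    exact Finset.sum_le_sum fun i _ => hterm i
  have hsq : ∑ i : Fin d, (c i)^2 ≤ (∑ i : Fin d, c i)^2 :=
    Finset.sum_sq_le_sq_sum_of_nonneg fun i _ => by positivity
  have hw : wCube d x = 12 * ∑ i : Fin d, c i := rfl
  rw [hw]
  nlinarith [hsq, hsum]
end

section
/- Let (Ω, 𝓕, P) be a probability space with a filtration (𝓕_n)_{n≥0}, let (Y_n)_{n≥0} be an adapted sequence of integrable random variables taking values in the natural numbers ℕ, and suppose there is a constant c > 0 such that for every n, E[Y_{n+1} | 𝓕_n] ≤ Y_n − c·1_{{Y_n ≥ 1}} almost surely. Then almost surely there exists N such that Y_n = 0 for all n ≥ N. -/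
/-!
Taking expectations in the drift condition gives `E[Y (n+1)] + c P(Y n ≥ 1) ≤ E[Y n]`; telescoping
and `Y ≥ 0` bound `c ∑ P(Y n ≥ 1)` by `E[Y 0]`. By Borel–Cantelli, almost surely `Y n ≥ 1` for only
finitely many `n`, and an `ℕ`-valued `Y n < 1` is `0`.
-/

open MeasureTheory Filter Finset

theorem summable_of_succ_add_le {a b : ℕ → ℝ} (ha : ∀ n, 0 ≤ a n) (hb : ∀ n, 0 ≤ b n)
    (h : ∀ n, a (n + 1) + b n ≤ a n) : Summable b := by
  have partial_sum : ∀ N, a N + ∑ n ∈ range N, b n ≤ a 0 := by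
    intro N
    induction N with
    | zero => simp
    | succ N ih => rw [sum_range_succ]; linarith [h N]
  exact summable_of_sum_range_le hb fun N => by linarith [partial_sum N, ha N]

namespace MeasureTheory

variable {Ω : Type*} {m m0 : MeasurableSpace Ω} {μ : Measure Ω} [IsFiniteMeasure μ]

theorem tsum_measure_ne_top_of_summable_measureReal {s : ℕ → Set Ω}
    (hs : Summable fun n => μ.real (s n)) : ∑' n, μ (s n) ≠ ⊤ := by
  have hofReal : ∀ n, μ (s n) = ENNReal.ofReal (μ.real (s n)) := fun n =>
    (ofReal_measureReal (measure_ne_top μ _)).symm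
  simp_rw [hofReal, ← ENNReal.ofReal_tsum_of_nonneg (fun _ => measureReal_nonneg) hs]
  exact ENNReal.ofReal_ne_top

theorem integral_add_mul_measureReal_le_of_condExp_le (hm : m ≤ m0) {f g : Ω → ℝ}
    (hf : Integrable f μ) {s : Set Ω} (hs : NullMeasurableSet s μ) (c : ℝ)
    (hle : ∀ᵐ ω ∂μ, μ[g | m] ω ≤ f ω - c * s.indicator (fun _ => (1 : ℝ)) ω) :
    ∫ ω, g ω ∂μ + c * μ.real s ≤ ∫ ω, f ω ∂μ := by
  have hind : Integrable (s.indicator fun _ => (1 : ℝ)) μ := (integrable_const 1).indicator₀ hs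
  have hmono : ∫ ω, g ω ∂μ ≤ ∫ ω, (f ω - c * s.indicator (fun _ => (1 : ℝ)) ω) ∂μ :=
    calc ∫ ω, g ω ∂μ = ∫ ω, μ[g | m] ω ∂μ := (integral_condExp hm).symm
      _ ≤ _ := integral_mono_ae integrable_condExp (hf.sub (hind.const_mul c)) hle
  rw [integral_sub hf (hind.const_mul c), integral_const_mul, integral_indicator₀ hs,
    setIntegral_const, smul_eq_mul, mul_one] at hmono
  linarith

end MeasureTheory

theorem supermartingale_hits_zero_general {Ω : Type*} {m0 : MeasurableSpace Ω}
    (μ : Measure Ω) [IsProbabilityMeasure μ]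
    (ℱ : Filtration ℕ m0)
    (Y : ℕ → Ω → ℕ)
    (hint : ∀ n, Integrable (fun ω => (Y n ω : ℝ)) μ)
    (c : ℝ) (hc : 0 < c)
    (hdec : ∀ n, ∀ᵐ ω ∂μ,
      (μ[fun ω' => (Y (n + 1) ω' : ℝ) | ℱ n]) ω
        ≤ (Y n ω : ℝ) - c * Set.indicator {ω' | 1 ≤ Y n ω'} (fun _ => (1:ℝ)) ω) :
    ∀ᵐ ω ∂μ, ∃ N : ℕ, ∀ n ≥ N, Y n ω = 0 := by
  set S : ℕ → Set Ω := fun n => {ω | 1 ≤ Y n ω}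
  have hS : ∀ n, NullMeasurableSet (S n) μ := by
    intro n
    have hpre : S n = (fun ω => (Y n ω : ℝ)) ⁻¹' Set.Ici 1 := by ext; simp [S]
    exact hpre ▸ (hint n).aemeasurable.nullMeasurable measurableSet_Ici
  have hstep : ∀ n, ∫ ω, (Y (n + 1) ω : ℝ) ∂μ + c * μ.real (S n) ≤ ∫ ω, (Y n ω : ℝ) ∂μ :=
    fun n => integral_add_mul_measureReal_le_of_condExp_le (ℱ.le n) (hint n) (hS n) c (hdec n)
  have hsum : Summable fun n => μ.real (S n) :=
    (summable_mul_left_iff hc.ne').mp <| summable_of_succ_add_le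
      (fun n => integral_nonneg fun ω => Nat.cast_nonneg _)
      (fun n => mul_nonneg hc.le measureReal_nonneg) hstep
  filter_upwards [ae_eventually_notMem (tsum_measure_ne_top_of_summable_measureReal hsum)]
    with ω hω
  obtain ⟨N, hN⟩ := eventually_atTop.mp hω
  exact ⟨N, fun n hn => Nat.lt_one_iff.mp (not_le.mp (hN n hn))⟩

theorem supermartingale_hits_zero {Ω : Type*} {m0 : MeasurableSpace Ω}
    (μ : Measure Ω) [IsProbabilityMeasure μ]
    (ℱ : Filtration ℕ m0)
    (Y : ℕ → Ω → ℕ)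
    (hadapted : ∀ n, StronglyMeasurable[ℱ n] (fun ω => (Y n ω : ℝ)))
    (hint : ∀ n, Integrable (fun ω => (Y n ω : ℝ)) μ)
    (c : ℝ) (hc : 0 < c)
    (hdec : ∀ n, ∀ᵐ ω ∂μ,
      (μ[fun ω' => (Y (n + 1) ω' : ℝ) | ℱ n]) ω
        ≤ (Y n ω : ℝ) - c * Set.indicator {ω' | 1 ≤ Y n ω'} (fun _ => (1:ℝ)) ω) :
    ∀ᵐ ω ∂μ, ∃ N : ℕ, ∀ n ≥ N, Y n ω = 0 :=
  supermartingale_hits_zero_general μ ℱ Y hint c hc hdec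
end
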